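/- arXiv:2209.14588 — 7 statements merged into one kernel-verified Lean document; each statement's English description precedes it below -/
import Mathlib

section
/- (Lemma 3.1.) For every integer x ≥ 2 there exists a family of permutations τ_1, …, τ_{2x−2} of Fin x × Fin 2 such that each τ_k is an involution satisfying (τ_k p).1 ≠ p.1 for every p (in particular each τ_k is fixed-point-free), and for every ordered pair (p, q) of elements of Fin x × Fin 2 with p.1 ≠ q.1 there is exactly one index k with τ_k(p) = q. (That is, the digraph K_x^* ≀ K̄_2, whose vertices are Fin x × Fin 2 and whose arcs are the pairs (p, q) with p.1 ≠ q.1, has a K_2^*-factorization into 2x − 2 factors, each factor being a perfect matching of digons.) -/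
/-!
Identify `Fin x × Fin 2` with `ZMod (2x-1) ∪ {∞}` (modelled by `Option`) via `(a, 0) ↦ a`,
`(0, 0) ↦ ∞` and `(a, 1) ↦ -a`. The maps `reflect c` (`∞ ↔ c`, `i ↔ 2c - i`) are fixed-point-free
involutions, and for `a ≠ b` exactly one of them sends `a` to `b` (its centre is `(a + b) / 2`, or
the finite one of `a, b` when the other is `∞`): they form the classical 1-factorization of
`K_{2x}`. Under the identification `reflect 0` pairs `(a, 0)` with `(a, 1)`, the non-arcs of
`K_x^* ≀ K̄_2`, so the other `2x - 2` maps `reflect c`, `c ≠ 0`, factorize it.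
-/

open Function

namespace WreathFactorization

section Reflect

variable {R : Type*} [CommRing R] [DecidableEq R]

def reflect (c : R) : Option R → Option R
  | none => some c
  | some i => if i = c then none else some (2 * c - i)

theorem reflect_involutive (c : R) : Involutive (reflect c) := by
  rintro (_ | i)
  · simp [reflect]
  · by_cases h : i = c
    · simp [reflect, h]
    · have h' : 2 * c - i ≠ c := fun h' => h (by linear_combination -h')
      simp only [reflect, if_neg h, if_neg h']
      ring_nf

variable [Invertible (2 : R)]

theorem reflect_ne_self (c : R) (a : Option R) : reflect c a ≠ a := by
  rcases a with _ | i
  · simp [reflect]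
  · by_cases h : i = c
    · simp [reflect, h]
    · simp only [reflect, if_neg h, ne_eq, Option.some.injEq]
      exact fun h' => h ((isUnit_of_invertible (2 : R)).mul_left_cancel (by linear_combination -h'))

theorem reflect_left_injective (a : Option R) : Injective (reflect · a) := by
  intro c c' h
  rcases a with _ | i
  · simpa [reflect] using h
  · simp only [reflect] at h
    by_cases hc : i = c <;> by_cases hc' : i = c'
    · exact hc.symm.trans hc'
    · simp [if_pos hc, if_neg hc'] at h
    · simp [if_neg hc, if_pos hc'] at h
    · simp only [if_neg hc, if_neg hc', Option.some.injEq] at h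
      exact (isUnit_of_invertible (2 : R)).mul_left_cancel (by linear_combination h)

theorem exists_reflect_eq {a b : Option R} (h : a ≠ b) : ∃ c, reflect c a = b := by
  rcases a with _ | i <;> rcases b with _ | j
  · exact absurd rfl h
  · exact ⟨j, rfl⟩
  · exact ⟨i, by simp [reflect]⟩
  · have hij : i ≠ j := fun h' => h (congrArg some h')
    have hi : i ≠ ⅟2 * (i + j) := fun h' =>
      hij (by linear_combination 2 * h' + (i + j) * invOf_mul_self (2 : R))
    refine ⟨⅟2 * (i + j), ?_⟩
    simp only [reflect, if_neg hi, Option.some.injEq]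
    linear_combination (i + j) * mul_invOf_self (2 : R)

theorem existsUnique_reflect_eq {a b : Option R} (h : a ≠ b) : ∃! c, reflect c a = b :=
  let ⟨c, hc⟩ := exists_reflect_eq h
  ⟨c, hc, fun _ hc' => reflect_left_injective a (hc'.trans hc.symm)⟩

theorem existsUnique_ne_zero_reflect_eq {a b : Option R} (hab : a ≠ b) (h0 : reflect 0 a ≠ b) :
    ∃! c : {c : R // c ≠ 0}, reflect (c : R) a = b :=
  let ⟨c, hc, huniq⟩ := existsUnique_reflect_eq hab
  ⟨⟨c, fun h => h0 (h ▸ hc)⟩, hc, fun c' hc' => Subtype.ext (huniq c' hc')⟩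

end Reflect

theorem natCast_inj_of_lt {n a b : ℕ} (ha : a < n) (hb : b < n) (h : (a : ZMod n) = b) :
    a = b := by
  rwa [ZMod.natCast_eq_natCast_iff', Nat.mod_eq_of_lt ha, Nat.mod_eq_of_lt hb] at h

theorem eq_zero_of_natCast_eq_neg {n a b : ℕ} (hab : a + b < n) (h : (a : ZMod n) = -b) :
    a = 0 := by
  have hdvd : n ∣ a + b := by
    rw [← ZMod.natCast_eq_zero_iff]
    push_cast
    linear_combination h
  have := Nat.eq_zero_of_dvd_of_lt hdvd hab
  omega

section Encoding

variable {m : ℕ}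

theorem two_mul_succ_eq_one : (2 : ZMod (2 * m + 1)) * (m + 1) = 1 := by
  have h := ZMod.natCast_self (2 * m + 1)
  push_cast at h
  linear_combination h

instance : Invertible (2 : ZMod (2 * m + 1)) := invertibleOfRightInverse _ _ two_mul_succ_eq_one

def encode (m : ℕ) : Fin (m + 1) × Fin 2 → Option (ZMod (2 * m + 1))
  | (a, 0) => if a = 0 then none else some (a : ℕ)
  | (a, 1) => some (-(a : ℕ))

theorem encode_rev (a : Fin (m + 1)) (j : Fin 2) :
    encode m (a, j.rev) = reflect 0 (encode m (a, j)) := by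
  have hcast : ((a : ℕ) : ZMod (2 * m + 1)) = 0 ↔ a = 0 :=
    ⟨fun h => Fin.ext <|
        natCast_inj_of_lt (n := 2 * m + 1) (b := 0) (by omega) (by omega) (by simpa using h),
      fun h => by simp [h]⟩
  fin_cases j <;> by_cases ha : a = 0 <;> simp [encode, reflect, ha, hcast]

theorem encode_injective : Injective (encode m) := by
  rintro ⟨a, j⟩ ⟨b, k⟩ h
  have ha := a.is_lt
  have hb := b.is_lt
  fin_cases j <;> fin_cases k <;> simp only [encode] at h ⊢
  · by_cases ha0 : a = 0 <;> by_cases hb0 : b = 0 <;> simp [ha0, hb0] at h ⊢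
    exact Fin.ext (natCast_inj_of_lt (by omega) (by omega) h)
  · split_ifs at h with ha0
    exact (ha0 (Fin.ext (eq_zero_of_natCast_eq_neg (by omega) (Option.some_injective _ h)))).elim
  · split_ifs at h with hb0
    exact (hb0 (Fin.ext
      (eq_zero_of_natCast_eq_neg (by omega) (Option.some_injective _ h).symm))).elim
  · rw [Fin.ext (natCast_inj_of_lt (by omega) (by omega)
      (neg_inj.mp (Option.some_injective _ h)))]

theorem encode_bijective : Bijective (encode m) := by
  rw [Fintype.bijective_iff_injective_and_card]
  refine ⟨encode_injective, ?_⟩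
  simp only [Fintype.card_prod, Fintype.card_fin, Fintype.card_option, ZMod.card]
  ring

noncomputable def encodeEquiv (m : ℕ) : Fin (m + 1) × Fin 2 ≃ Option (ZMod (2 * m + 1)) :=
  .ofBijective _ encode_bijective

theorem fst_eq_iff_encode_eq_or {p q : Fin (m + 1) × Fin 2} :
    q.1 = p.1 ↔ encode m q = encode m p ∨ encode m q = reflect 0 (encode m p) := by
  rw [← encode_rev, encode_injective.eq_iff, encode_injective.eq_iff]
  obtain ⟨a, j⟩ := p
  obtain ⟨b, k⟩ := q
  fin_cases j <;> fin_cases k <;> simp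

end Encoding

end WreathFactorization

open WreathFactorization in
/-- Lemma 3.1: the digraph `K_x^* ≀ K̄_2` (vertices `Fin x × Fin 2`, arcs all
ordered pairs with distinct first coordinates) has a `K_2^*`-factorization into
`2x - 2` factors: fixed-point-free involutions `τ k` moving the first
coordinate, such that every arc `(p, q)` lies in exactly one factor. -/
theorem wreath_K2star_factorization (x : ℕ) (hx : 2 ≤ x) :
    ∃ τ : Fin (2 * x - 2) → Equiv.Perm (Fin x × Fin 2),
      (∀ k, ∀ p, τ k (τ k p) = p) ∧
      (∀ k, ∀ p, (τ k p).1 ≠ p.1) ∧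
      (∀ p q : Fin x × Fin 2, p.1 ≠ q.1 → ∃! k, τ k p = q) := by
  obtain ⟨m, rfl⟩ : ∃ m, x = m + 1 := ⟨x - 1, by omega⟩
  let e := encodeEquiv m
  let idx : Fin (2 * (m + 1) - 2) ≃ {c : ZMod (2 * m + 1) // c ≠ 0} :=
    Fintype.equivOfCardEq (by simp [Fintype.card_subtype_compl]; omega)
  let τ k := e.symm.permCongr (reflect_involutive (idx k : ZMod (2 * m + 1))).toPerm
  have hτ : ∀ k p q,
      τ k p = q ↔ reflect (idx k : ZMod (2 * m + 1)) (encode m p) = encode m q :=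
    fun k p q => by simp [τ, e, encodeEquiv, Equiv.symm_apply_eq]
  refine ⟨τ, fun k p => ?_, fun k p => ?_, fun p q hpq => ?_⟩
  · simp [τ, reflect_involutive _ _]
  · rw [Ne, fst_eq_iff_encode_eq_or, ← (hτ k p _).mp rfl, not_or]
    exact ⟨reflect_ne_self _ _, fun h => (idx k).2 (reflect_left_injective _ h)⟩
  · rw [Ne, eq_comm, fst_eq_iff_encode_eq_or, not_or] at hpq
    exact (existsUnique_congr (hτ · p q)).mpr <| idx.existsUnique_congr_right.mpr <|
      existsUnique_ne_zero_reflect_eq (Ne.symm hpq.1) (Ne.symm hpq.2)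
end

section
/- (Lemma 3.2, main even construction.) Let m ≥ 4 and n ≥ 4 be even integers and let h = lcm(m, n). Suppose that for all nonnegative integers r′, s′ with r′ + s′ = h − 1 there is a solution to HWP*(h; m^{r′}, n^{s′}). Then for every positive integer x and all nonnegative integers r, s with r + s = h·x − 1, there is a solution to HWP*(h·x; m^r, n^s). -/
/-- A solution to the directed Hamilton–Waterloo problem HWP*(v; m^r, n^s):
a family of `r + s` permutations of `Fin v`, the first `r` of which are
fixed-point-free with all cycles of length `m` (i.e. every point has minimal
period `m`), the last `s` fixed-point-free with all cycles of length `n`,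
such that for every ordered pair of distinct vertices `(x, y)` there is exactly
one index `i` with `σ i x = y`. -/
def HWPStarSolution (v m n r s : ℕ) : Prop :=
  ∃ σ : Fin (r + s) → Equiv.Perm (Fin v),
    (∀ i : Fin (r + s), (i : ℕ) < r → ∀ x : Fin v, Function.minimalPeriod ⇑(σ i) x = m) ∧
    (∀ i : Fin (r + s), r ≤ (i : ℕ) → ∀ x : Fin v, Function.minimalPeriod ⇑(σ i) x = n) ∧
    (∀ x y : Fin v, x ≠ y → ∃! i : Fin (r + s), σ i x = y)

/-!
Write `h = 2Q` and view the vertices as `(ZMod 2 × ZMod Q) × ZMod x`: `x` columns of `h` vertices.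
The arcs inside the columns are covered by running the given solution of
HWP*(h; m^t, n^(h-1-t)) on all columns at once. For each distance `1 ≤ d ≤ x/2`, the arcs between
columns `j` and `j ± d` are covered by `4Q` (by `2Q` if `2d = x`) zigzag 2-factors: they step
alternately forward and backward along the `d`-orbit of the columns, and their square translates the
`ZMod Q` coordinate by some `β`, so all their cycles have length `2 · ord β`; this is `m` for
`β = Q / (m/2)` and `n` for `β = Q / (n/2)`. The resulting `(h - 1) + Q(2x - 2) = hx - 1`
permutations disagree at every vertex, so counting shows that they decompose `K*_{hx}`; writing
`r = t + Qk` with `t ≤ h - 1` and `k ≤ 2x - 2` distributes the `m`-factors.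
-/

open Function

theorem Function.Semiconj.minimalPeriod_eq {α β : Type*} {h : α → β} {f : α → α} {g : β → β}
    (hs : Semiconj h f g) (hh : Injective h) (a : α) :
    minimalPeriod g (h a) = minimalPeriod f a :=
  minimalPeriod_eq_minimalPeriod_iff.mpr fun n => by
    rw [IsPeriodicPt, IsFixedPt, ← (hs.iterate_right n) a, hh.eq_iff]; rfl

theorem Equiv.minimalPeriod_permCongr {α β : Type*} (E : α ≃ β) (f : Equiv.Perm α) (b : β) :
    minimalPeriod (E.permCongr f) b = minimalPeriod f (E.symm b) := by
  have hs : Semiconj E f (E.permCongr f) := fun a => by simp [Equiv.permCongr_apply]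
  simpa using hs.minimalPeriod_eq E.injective (E.symm b)

theorem Equiv.minimalPeriod_prodCongr_refl {α β : Type*} (f : Equiv.Perm α) (p : α × β) :
    minimalPeriod (f.prodCongr (Equiv.refl β)) p = minimalPeriod f p.1 := by
  rw [show ⇑(f.prodCongr (Equiv.refl β)) = Prod.map f id from rfl, minimalPeriod_prodMap,
    minimalPeriod_id, Nat.lcm_one_right]

theorem Function.minimalPeriod_eq_two_mul {α : Type*} {f : α → α} {a : α}
    (hodd : ∀ k, f^[2 * k + 1] a ≠ a) :
    minimalPeriod f a = 2 * minimalPeriod f^[2] a := by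
  have heven : Even (minimalPeriod f a) := by
    by_contra hne
    obtain ⟨k, hk⟩ := Nat.not_even_iff_odd.mp hne
    exact hodd k (hk ▸ isPeriodicPt_minimalPeriod f a)
  rw [minimalPeriod_iterate_eq_div_gcd two_ne_zero, Nat.gcd_eq_right heven.two_dvd,
    Nat.mul_div_cancel' heven.two_dvd]

theorem Function.minimalPeriod_eq_two_mul_of_sq {α Y : Type*} {f g : α → α} (π : α → Y)
    (hsq : ∀ a, f (f a) = g a) (hg : ∀ a, π (g a) = π a) (hf : ∀ a, π (f a) ≠ π a) (a : α) :
    minimalPeriod f a = 2 * minimalPeriod g a := by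
  have hf2 : f^[2] = g := funext hsq
  rw [minimalPeriod_eq_two_mul fun k h => ?_, hf2]
  have hπ : π (g^[k] a) = π a := (Semiconj.iterate_right (f := π) (gb := id) hg k a).trans (by simp)
  rw [iterate_succ_apply', iterate_mul, hf2] at h
  exact hf _ (by rw [h, hπ])

theorem Function.apply_ne_self_of_minimalPeriod_ne_one {α : Type*} {f : α → α} {a : α}
    (h : minimalPeriod f a ≠ 1) : f a ≠ a :=
  fun hfix => h (minimalPeriod_eq_one_iff_isFixedPt.mpr hfix)

theorem existsUnique_apply_eq_of_injective {ι W : Type*} [Fintype ι] [Fintype W]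
    (σ : ι → Equiv.Perm W) (hcard : Fintype.card W = Fintype.card ι + 1)
    (hfix : ∀ i w, σ i w ≠ w) (hinj : ∀ w, Injective fun i => σ i w) {a b : W} (hab : a ≠ b) :
    ∃! i, σ i a = b := by
  classical
  let φ : ι → {w // w ≠ a} := fun i => ⟨σ i a, hfix i a⟩
  have hφ : Bijective φ := by
    refine (Fintype.bijective_iff_injective_and_card φ).mpr
      ⟨fun i j hij => hinj a (congrArg Subtype.val hij), ?_⟩
    rw [Fintype.card_subtype_compl, Fintype.card_subtype_eq, hcard]; rfl
  simpa [φ, Subtype.ext_iff] using hφ.existsUnique ⟨b, hab.symm⟩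

theorem exists_finEquiv_val_lt_iff {ι : Type*} [Fintype ι] (p : ι → Prop) [DecidablePred p]
    {r s : ℕ} (hp : Fintype.card {i // p i} = r) (hnp : Fintype.card {i // ¬p i} = s) :
    ∃ e : Fin (r + s) ≃ ι, ∀ i : Fin (r + s), (i : ℕ) < r ↔ p (e i) := by
  refine ⟨finSumFinEquiv.symm.trans ((Equiv.sumCongr (Fintype.equivFinOfCardEq hp).symm
    (Fintype.equivFinOfCardEq hnp).symm).trans (Equiv.sumCompl p)), fun i => ?_⟩
  refine Fin.addCases (fun a => ?_) (fun b => ?_) i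
  · simpa using ((Fintype.equivFinOfCardEq hp).symm a).2
  · simpa using ((Fintype.equivFinOfCardEq hnp).symm b).2

theorem hwpStarSolution_of_injective {v m n r s : ℕ} {ι W : Type*} [Fintype ι] [Fintype W]
    (E : W ≃ Fin v) (σ : ι → Equiv.Perm W) (p : ι → Prop) [DecidablePred p]
    (hι : Fintype.card ι = r + s) (hp : Fintype.card {i // p i} = r) (hv : v = r + s + 1)
    (hm : m ≠ 1) (hn : n ≠ 1)
    (hσm : ∀ i, p i → ∀ w, minimalPeriod (σ i) w = m)
    (hσn : ∀ i, ¬p i → ∀ w, minimalPeriod (σ i) w = n)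
    (hinj : ∀ w, Injective fun i => σ i w) :
    HWPStarSolution v m n r s := by
  obtain ⟨e, he⟩ := exists_finEquiv_val_lt_iff p hp
    (by rw [Fintype.card_subtype_compl, hι, hp, Nat.add_sub_cancel_left])
  have hfix : ∀ i w, σ i w ≠ w := fun i w => by
    by_cases hpi : p i
    · exact apply_ne_self_of_minimalPeriod_ne_one (hσm i hpi w ▸ hm)
    · exact apply_ne_self_of_minimalPeriod_ne_one (hσn i hpi w ▸ hn)
  refine ⟨fun i => E.permCongr (σ (e i)), fun i hi x => ?_, fun i hi x => ?_, fun x y hxy => ?_⟩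
  · rw [Equiv.minimalPeriod_permCongr]; exact hσm _ ((he i).mp hi) _
  · rw [Equiv.minimalPeriod_permCongr]; exact hσn _ (fun h => (he i).mpr h |>.not_ge hi) _
  · have hxy' : E.symm x ≠ E.symm y := E.symm.injective.ne hxy
    have hW : Fintype.card W = Fintype.card ι + 1 := by rw [Fintype.card_congr E, hι, hv]; simp
    obtain ⟨j, hj, huniq⟩ := existsUnique_apply_eq_of_injective σ hW hfix hinj hxy'
    refine ⟨e.symm j, by simp [Equiv.permCongr_apply, hj], fun i hi => ?_⟩
    rw [Equiv.eq_symm_apply]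
    exact huniq _ (by simpa [Equiv.permCongr_apply, ← Equiv.eq_symm_apply] using hi)

section Zigzag

variable {Q L : ℕ} {A Y : Type*}

theorem ZMod.val_add_one_of_two_le (hL : 2 ≤ L) (i : ZMod L) :
    (i + 1).val = if i.val + 1 = L then 0 else i.val + 1 := by
  have : NeZero L := ⟨by omega⟩
  have hi := ZMod.val_lt i
  rw [ZMod.val_add, ZMod.val_one'' (by omega)]
  split_ifs with h
  · rw [h, Nat.mod_self]
  · exact Nat.mod_eq_of_lt (by omega)

/-- A proper colouring of the cycle `ZMod L` (for `L ≥ 2`) by the three nonzero vectors of `𝔽₂²`.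
Consecutive colours form a basis, so the pattern bits of a class `e` at two consecutive positions
determine `e`. -/
def zigzagColor (L : ℕ) (i : ZMod L) : ZMod 2 × ZMod 2 :=
  if i.val + 1 = L then (1, 1) else if Even i.val then (1, 0) else (0, 1)

theorem zigzagColor_ne_zero (i : ZMod L) : zigzagColor L i ≠ 0 := by
  unfold zigzagColor; split_ifs <;> decide

theorem zigzagColor_add_one_ne (hL : 2 ≤ L) (i : ZMod L) :
    zigzagColor L (i + 1) ≠ zigzagColor L i := by
  have : NeZero L := ⟨by omega⟩
  have hi := ZMod.val_lt i
  unfold zigzagColor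
  rw [ZMod.val_add_one_of_two_le hL]
  by_cases hlast : i.val + 1 = L
  · simp [hlast, show (0 : ℕ) + 1 ≠ L by omega]
  · by_cases hpar : Even i.val <;>
      simp [hlast, hpar, Nat.even_add_one] <;> split_ifs <;> decide

def zigzagPattern (e : ZMod 2 × ZMod 2) (i : ZMod L) : ZMod 2 :=
  e.1 * (zigzagColor L i).1 + e.2 * (zigzagColor L i).2

theorem zigzagPattern_inj (hL : 2 ≤ L) {i : ZMod L} {e e' : ZMod 2 × ZMod 2}
    (h₀ : zigzagPattern e i = zigzagPattern e' i)
    (h₁ : zigzagPattern e (i + 1) = zigzagPattern e' (i + 1)) : e = e' := by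
  have key : ∀ u v e e' : ZMod 2 × ZMod 2, u ≠ 0 → v ≠ 0 → u ≠ v →
      e.1 * u.1 + e.2 * u.2 = e'.1 * u.1 + e'.2 * u.2 →
      e.1 * v.1 + e.2 * v.2 = e'.1 * v.1 + e'.2 * v.2 → e = e' := by decide
  exact key _ _ e e' (zigzagColor_ne_zero i) (zigzagColor_ne_zero (i + 1))
    (zigzagColor_add_one_ne hL i).symm h₀ h₁

theorem zigzagPattern_add_one_eq_of_two (i : ZMod 2) {e e' : ZMod 2 × ZMod 2}
    (he : e.1 = 0) (he' : e'.1 = 0) (h : zigzagPattern e i ≠ zigzagPattern e' i) :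
    zigzagPattern e (i + 1) = zigzagPattern e' (i + 1) := by
  obtain ⟨a, b⟩ := e
  obtain ⟨a', b'⟩ := e'
  dsimp only at he he'
  subst he he'
  revert i b b' h
  decide

def rowShift (β : ZMod Q) : Equiv.Perm ((ZMod 2 × ZMod Q) × Y) :=
  ((Equiv.refl _).prodCongr (Equiv.addRight β)).prodCongr (Equiv.refl Y)

@[simp] theorem rowShift_apply (β : ZMod Q) (ε : ZMod 2) (q : ZMod Q) (y : Y) :
    rowShift β ((ε, q), y) = ((ε, q + β), y) := rfl

theorem minimalPeriod_rowShift (β : ZMod Q) (p : (ZMod 2 × ZMod Q) × Y) :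
    minimalPeriod (rowShift β) p = addOrderOf β := by
  have hs : Semiconj (fun z : ZMod Q => ((p.1.1, p.1.2 + z), p.2)) (β + ·) (rowShift β) :=
    fun z => by simp [add_comm, add_left_comm]
  simpa [addOrderOf] using hs.minimalPeriod_eq (fun z z' h => by simpa using h) 0

theorem zmod_two_ne_iff_eq_add_one {a b : ZMod 2} : a ≠ b ↔ a = b + 1 := by revert a b; decide

/-- Each step lands on the bit opposite to the pattern, so the next step goes back: the cycles
zigzag between adjacent positions, and two steps translate `q` by `β`. -/
def zigzag (e : ZMod 2 × ZMod 2) (c β : ZMod Q) :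
    (ZMod 2 × ZMod Q) × (A × ZMod L) → (ZMod 2 × ZMod Q) × (A × ZMod L)
  | ((ε, q), (a, i)) =>
    if ε = zigzagPattern e i then ((zigzagPattern e (i + 1) + 1, q + c), (a, i + 1))
    else ((zigzagPattern e (i - 1), q + β - c), (a, i - 1))

theorem zigzag_of_eq {e : ZMod 2 × ZMod 2} {c β : ZMod Q} {ε : ZMod 2} {q : ZMod Q} {a : A}
    {i : ZMod L} (h : ε = zigzagPattern e i) :
    zigzag e c β ((ε, q), (a, i)) = ((zigzagPattern e (i + 1) + 1, q + c), (a, i + 1)) :=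
  if_pos h

theorem zigzag_of_ne {e : ZMod 2 × ZMod 2} {c β : ZMod Q} {ε : ZMod 2} {q : ZMod Q} {a : A}
    {i : ZMod L} (h : ε ≠ zigzagPattern e i) :
    zigzag e c β ((ε, q), (a, i)) = ((zigzagPattern e (i - 1), q + β - c), (a, i - 1)) :=
  if_neg h

theorem zigzag_zigzag (e : ZMod 2 × ZMod 2) (c β : ZMod Q) (p : (ZMod 2 × ZMod Q) × (A × ZMod L)) :
    zigzag e c β (zigzag e c β p) = rowShift β p := by
  obtain ⟨⟨ε, q⟩, a, i⟩ := p
  by_cases h : ε = zigzagPattern e i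
  · rw [zigzag_of_eq h, zigzag_of_ne (by simp), add_sub_cancel_right, h]
    simp only [rowShift_apply]; ring_nf
  · rw [zigzag_of_ne h, zigzag_of_eq rfl, sub_add_cancel,
      ← zmod_two_ne_iff_eq_add_one.mp h]
    simp only [rowShift_apply]; ring_nf

theorem zigzag_snd (e : ZMod 2 × ZMod 2) (c β : ZMod Q) (p : (ZMod 2 × ZMod Q) × (A × ZMod L)) :
    (zigzag e c β p).2 = (p.2.1, p.2.2 + 1) ∨ (zigzag e c β p).2 = (p.2.1, p.2.2 - 1) := by
  obtain ⟨⟨ε, q⟩, a, i⟩ := p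
  by_cases h : ε = zigzagPattern e i
  · exact Or.inl (by rw [zigzag_of_eq h])
  · exact Or.inr (by rw [zigzag_of_ne h])

noncomputable def zigzagPerm (e : ZMod 2 × ZMod 2) (c β : ZMod Q) :
    Equiv.Perm ((ZMod 2 × ZMod Q) × (A × ZMod L)) :=
  Equiv.ofBijective (zigzag e c β) <| by
    have h : zigzag e c β ∘ zigzag e c β = rowShift (Y := A × ZMod L) β :=
      funext (zigzag_zigzag e c β)
    exact ⟨(h ▸ (rowShift β).injective).of_comp, (h ▸ (rowShift β).surjective).of_comp⟩

theorem zigzagPerm_apply (e : ZMod 2 × ZMod 2) (c β : ZMod Q)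
    (p : (ZMod 2 × ZMod Q) × (A × ZMod L)) :
    zigzagPerm e c β p = zigzag e c β p := rfl

theorem minimalPeriod_zigzagPerm (hL : 2 ≤ L) (e : ZMod 2 × ZMod 2) (c β : ZMod Q)
    (p : (ZMod 2 × ZMod Q) × (A × ZMod L)) :
    minimalPeriod (zigzagPerm e c β) p = 2 * addOrderOf β := by
  have : Fact (1 < L) := ⟨by omega⟩
  show minimalPeriod (zigzag e c β) p = _
  rw [minimalPeriod_eq_two_mul_of_sq (fun p => p.2.2) (zigzag_zigzag e c β) (fun _ => rfl)
    fun p hp => ?_, minimalPeriod_rowShift]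
  rcases zigzag_snd e c β p with h | h <;> rw [h] at hp <;> simp at hp

theorem two_eq_of_add_one_eq_sub_one (hL : 2 ≤ L) {i : ZMod L} (h : i + 1 = i - 1) : L = 2 := by
  have h2 : ((2 : ℕ) : ZMod L) = 0 := by push_cast; linear_combination h
  have := Nat.le_of_dvd two_pos ((ZMod.natCast_eq_zero_iff 2 L).mp h2)
  omega

theorem zigzag_ne_of_eq_of_ne (hL : 2 ≤ L) {e e' : ZMod 2 × ZMod 2} {c c' β β' : ZMod Q}
    {ε : ZMod 2} {q : ZMod Q} {a : A} {i : ZMod L} (hclass : L = 2 → e.1 = 0 ∧ e'.1 = 0)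
    (h₁ : ε = zigzagPattern e i)
    (h₂ : ε ≠ zigzagPattern e' i) :
    zigzag e c β ((ε, q), (a, i)) ≠ zigzag e' c' β' ((ε, q), (a, i)) := by
  rw [zigzag_of_eq h₁, zigzag_of_ne h₂]
  intro heq
  have hL2 := two_eq_of_add_one_eq_sub_one hL (congrArg (·.2.2) heq)
  subst hL2
  obtain ⟨he, he'⟩ := hclass rfl
  have hpat := zigzagPattern_add_one_eq_of_two i he he' (h₁ ▸ h₂)
  have hε : zigzagPattern e (i + 1) + 1 = zigzagPattern e' (i - 1) := congrArg (·.1.1) heq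
  rw [show ∀ j : ZMod 2, j - 1 = j + 1 by decide, ← hpat] at hε
  exact zmod_two_ne_iff_eq_add_one.mpr hε.symm rfl

theorem zigzag_ne (hL : 2 ≤ L) {e e' : ZMod 2 × ZMod 2} {c c' β β' : ZMod Q}
    (hclass : L = 2 → e.1 = 0 ∧ e'.1 = 0) (hsame : e = e' → β = β' ∧ c ≠ c')
    (p : (ZMod 2 × ZMod Q) × (A × ZMod L)) :
    zigzag e c β p ≠ zigzag e' c' β' p := by
  obtain ⟨⟨ε, q⟩, a, i⟩ := p
  by_cases h₁ : ε = zigzagPattern e i <;> by_cases h₂ : ε = zigzagPattern e' i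
  · rw [zigzag_of_eq h₁, zigzag_of_eq h₂]
    intro heq
    have he : e = e' := zigzagPattern_inj hL (h₁.symm.trans h₂)
      (add_right_cancel (congrArg (·.1.1) heq))
    exact (hsame he).2 (add_left_cancel (congrArg (·.1.2) heq))
  · exact zigzag_ne_of_eq_of_ne hL hclass h₁ h₂
  · exact (zigzag_ne_of_eq_of_ne hL (fun h => (hclass h).symm) h₂ h₁).symm
  · rw [zigzag_of_ne h₁, zigzag_of_ne h₂]
    intro heq
    have hi : zigzagPattern e (i - 1 + 1) = zigzagPattern e' (i - 1 + 1) := by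
      rw [sub_add_cancel]
      exact add_right_cancel
        ((zmod_two_ne_iff_eq_add_one.mp h₁).symm.trans (zmod_two_ne_iff_eq_add_one.mp h₂))
    have he : e = e' := zigzagPattern_inj hL (congrArg (·.1.1) heq) hi
    obtain ⟨hβ, hc⟩ := hsame he
    subst hβ
    exact hc (sub_right_injective (congrArg (·.1.2) heq))

end Zigzag

theorem ZMod.natCast_mul_mod_eq {x d L : ℕ} (hdL : x ∣ d * L) (k : ℕ) :
    ((d * (k % L) : ℕ) : ZMod x) = ((d * k : ℕ) : ZMod x) := by
  have h0 : ((d * L : ℕ) : ZMod x) = 0 := (ZMod.natCast_eq_zero_iff _ _).mpr hdL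
  conv_rhs => rw [← Nat.mod_add_div k L]
  push_cast at h0 ⊢
  linear_combination -(↑(k / L) : ZMod x) * h0

theorem two_mul_eq_of_div_gcd_eq_two {x d : ℕ} (hd : 0 < d) (hdx : 2 * d ≤ x)
    (h : x / x.gcd d = 2) : 2 * d = x := by
  have hgx := Nat.mul_div_cancel' (Nat.gcd_dvd_left x d)
  have := Nat.le_of_dvd hd (Nat.gcd_dvd_right x d)
  rw [h] at hgx
  omega

instance (x d : ℕ) [NeZero x] : NeZero (x.gcd d) :=
  ⟨(Nat.gcd_pos_of_pos_left d (NeZero.pos x)).ne'⟩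

instance (x d : ℕ) [NeZero x] : NeZero (x / x.gcd d) :=
  ⟨(Nat.div_pos (Nat.gcd_le_left d (NeZero.pos x)) (NeZero.pos _)).ne'⟩

theorem injective_stride {x : ℕ} [NeZero x] (d : ℕ) :
    Injective fun p : ZMod (x.gcd d) × ZMod (x / x.gcd d) =>
      ((p.1.val + d * p.2.val : ℕ) : ZMod x) := by
  set g := x.gcd d
  set L := x / g
  have hg : 0 < g := Nat.gcd_pos_of_pos_left d (NeZero.pos x)
  have hgL : g * L = x := Nat.mul_div_cancel' (Nat.gcd_dvd_left x d)
  have hco : Nat.Coprime L (d / g) := Nat.coprime_div_gcd_div_gcd hg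
  obtain ⟨d', hd'⟩ := Nat.gcd_dvd_right x d
  rw [hd', Nat.mul_div_cancel_left _ hg] at hco
  rintro ⟨a, i⟩ ⟨a', i'⟩ h
  have hx : a.val + g * (d' * i.val) ≡ a'.val + g * (d' * i'.val) [MOD g * L] := by
    rw [hgL, ← mul_assoc, ← mul_assoc, ← hd']
    exact (ZMod.natCast_eq_natCast_iff _ _ _).mp h
  have ha : a = a' := by
    have hmod := hx.of_mul_right L
    simp only [Nat.ModEq, Nat.add_mul_mod_self_left] at hmod
    exact ZMod.val_injective _ (Nat.ModEq.eq_of_lt_of_lt hmod (ZMod.val_lt a) (ZMod.val_lt a'))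
  subst ha
  have hi : i.val ≡ i'.val [MOD L] :=
    ((Nat.ModEq.add_left_cancel' _ hx).mul_left_cancel' hg.ne').cancel_left_of_coprime hco
  rw [ZMod.val_injective _ (hi.eq_of_lt_of_lt (ZMod.val_lt i) (ZMod.val_lt i'))]

/-- The columns `ZMod x` fall into `gcd x d` orbits of `· + d`, each of length `x / gcd x d`;
`(a, i)` is the `i`-th column of the orbit through `a`. -/
noncomputable def strideEquiv (x d : ℕ) [NeZero x] :
    ZMod (x.gcd d) × ZMod (x / x.gcd d) ≃ ZMod x :=
  Equiv.ofBijective _ <| (Fintype.bijective_iff_injective_and_card _).mpr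
    ⟨injective_stride d, by simp [ZMod.card, Nat.mul_div_cancel' (Nat.gcd_dvd_left x d)]⟩

noncomputable def blockPerm {Q : ℕ} (x d : ℕ) [NeZero x] (e : ZMod 2 × ZMod 2) (c β : ZMod Q) :
    Equiv.Perm ((ZMod 2 × ZMod Q) × ZMod x) :=
  ((Equiv.refl (ZMod 2 × ZMod Q)).prodCongr (strideEquiv x d)).permCongr (zigzagPerm e c β)

section Blocks

variable {Q x : ℕ} [NeZero x]

theorem strideEquiv_apply (d : ℕ) (p : ZMod (x.gcd d) × ZMod (x / x.gcd d)) :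
    strideEquiv x d p = ((p.1.val + d * p.2.val : ℕ) : ZMod x) := rfl

theorem strideEquiv_add_one (d : ℕ) (a : ZMod (x.gcd d)) (i : ZMod (x / x.gcd d)) :
    strideEquiv x d (a, i + 1) = strideEquiv x d (a, i) + d := by
  have hdL : x ∣ d * (x / x.gcd d) := by
    refine Dvd.intro_left (d / x.gcd d) ?_
    rw [← Nat.mul_div_assoc _ (Nat.gcd_dvd_left x d),
      Nat.div_mul_right_comm (Nat.gcd_dvd_right x d)]
  have key := ZMod.natCast_mul_mod_eq hdL
  rw [strideEquiv_apply, strideEquiv_apply, ZMod.val_add, ZMod.val_one_eq_one_mod]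
  calc (((a.val + d * ((i.val + 1 % (x / x.gcd d)) % (x / x.gcd d))) : ℕ) : ZMod x)
      = a.val + ((d * i.val : ℕ) : ZMod x) + ((d * (1 % (x / x.gcd d)) : ℕ) : ZMod x) := by
        rw [Nat.cast_add, key, mul_add, Nat.cast_add, add_assoc]
    _ = _ := by rw [key]; push_cast; ring

theorem strideEquiv_sub_one (d : ℕ) (a : ZMod (x.gcd d)) (i : ZMod (x / x.gcd d)) :
    strideEquiv x d (a, i - 1) = strideEquiv x d (a, i) - d := by
  rw [eq_sub_iff_add_eq, ← strideEquiv_add_one, sub_add_cancel]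

theorem two_le_div_gcd {d : ℕ} (hd : 0 < d) (hdx : d < x) : 2 ≤ x / x.gcd d := by
  by_contra! h
  have h1 : x / x.gcd d = 1 := by have := NeZero.pos (x / x.gcd d); omega
  have hgx : x.gcd d = x := by
    simpa [h1] using Nat.mul_div_cancel' (Nat.gcd_dvd_left x d)
  have := Nat.le_of_dvd hd (hgx ▸ Nat.gcd_dvd_right x d)
  omega

theorem minimalPeriod_blockPerm {d : ℕ} (hd : 0 < d) (hdx : d < x) (e : ZMod 2 × ZMod 2)
    (c β : ZMod Q) (w : (ZMod 2 × ZMod Q) × ZMod x) :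
    minimalPeriod (blockPerm x d e c β) w = 2 * addOrderOf β := by
  rw [blockPerm, Equiv.minimalPeriod_permCongr,
    minimalPeriod_zigzagPerm (two_le_div_gcd hd hdx)]

theorem blockPerm_snd (d : ℕ) (e : ZMod 2 × ZMod 2) (c β : ZMod Q)
    (w : (ZMod 2 × ZMod Q) × ZMod x) :
    (blockPerm x d e c β w).2 = w.2 + d ∨ (blockPerm x d e c β w).2 = w.2 - d := by
  obtain ⟨p, rfl⟩ := ((Equiv.refl (ZMod 2 × ZMod Q)).prodCongr (strideEquiv x d)).surjective w
  rw [blockPerm, Equiv.permCongr_apply, Equiv.symm_apply_apply]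
  change strideEquiv x d (zigzag e c β p).2 = strideEquiv x d p.2 + d ∨
    strideEquiv x d (zigzag e c β p).2 = strideEquiv x d p.2 - d
  rcases zigzag_snd e c β p with h | h <;> rw [h]
  · exact Or.inl (strideEquiv_add_one d _ _)
  · exact Or.inr (strideEquiv_sub_one d _ _)

theorem blockPerm_ne {d : ℕ} (hd : 0 < d) (hdx : 2 * d ≤ x) {e e' : ZMod 2 × ZMod 2}
    {c c' β β' : ZMod Q} (hclass : 2 * d = x → e.1 = 0 ∧ e'.1 = 0)
    (hsame : e = e' → β = β' ∧ c ≠ c') (w : (ZMod 2 × ZMod Q) × ZMod x) :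
    blockPerm x d e c β w ≠ blockPerm x d e' c' β' w := by
  simp only [blockPerm, Equiv.permCongr_apply, zigzagPerm_apply]
  exact Equiv.injective _ |>.ne <| zigzag_ne (two_le_div_gcd hd (by omega))
    (fun h => hclass (two_mul_eq_of_div_gcd_eq_two hd hdx h)) hsame _

end Blocks

theorem eq_of_natCast_eq_or_eq_neg {x a b : ℕ} (ha : 2 * a ≤ x) (hb : 2 * b ≤ x)
    (h : (a : ZMod x) = b ∨ (a : ZMod x) = -b) : a = b := by
  rcases h with h | h
  · rw [ZMod.natCast_eq_natCast_iff'] at h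
    rcases Nat.eq_zero_or_pos x with rfl | hx
    · omega
    · rwa [Nat.mod_eq_of_lt (by omega), Nat.mod_eq_of_lt (by omega)] at h
  · have : ((a + b : ℕ) : ZMod x) = 0 := by push_cast; rw [h]; ring
    obtain ⟨c, hc⟩ := (ZMod.natCast_eq_zero_iff _ _).mp this
    rcases c with _ | _ | c
    · omega
    · omega
    · nlinarith

theorem eq_of_add_or_sub_eq {x a b : ℕ} (ha : 2 * a ≤ x) (hb : 2 * b ≤ x) {w y : ZMod x}
    (hya : y = w + a ∨ y = w - a) (hyb : y = w + b ∨ y = w - b) : a = b := by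
  refine eq_of_natCast_eq_or_eq_neg ha hb ?_
  rcases hya with rfl | rfl <;> rcases hyb with h | h
  · exact Or.inl (by linear_combination h)
  · exact Or.inr (by linear_combination h)
  · exact Or.inr (by linear_combination -h)
  · exact Or.inl (by linear_combination -h)

/-- The between-column 2-factors come in `2x - 2` units `u`, each of displacement `u / 4 + 1` and
class `unitClass u`. A displacement `d` with `2d = x` only gets the units `4d - 4` and `4d - 3`,
whose classes have first coordinate `0`, as `zigzag_ne` needs on two-column orbits. -/
def unitClass (u : ℕ) : ZMod 2 × ZMod 2 := ((u / 2 : ℕ), (u : ℕ))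

noncomputable def unitPerm {Q : ℕ} (x : ℕ) [NeZero x] (u : ℕ) (c β : ZMod Q) :
    Equiv.Perm ((ZMod 2 × ZMod Q) × ZMod x) :=
  blockPerm x (u / 4 + 1) (unitClass u) c β

theorem unitClass_fst_eq_zero {u : ℕ} (hu : u % 4 < 2) : (unitClass u).1 = 0 :=
  (ZMod.natCast_eq_zero_iff _ _).mpr (by omega)

theorem eq_of_unitClass_eq {u u' : ℕ} (h : u / 4 = u' / 4) (he : unitClass u = unitClass u') :
    u = u' := by
  simp only [unitClass, Prod.mk.injEq, ZMod.natCast_eq_natCast_iff'] at he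
  omega

section Units

variable {Q x : ℕ} [NeZero x]

theorem minimalPeriod_unitPerm {u : ℕ} (hu : u < 2 * x - 2) (c β : ZMod Q)
    (w : (ZMod 2 × ZMod Q) × ZMod x) :
    minimalPeriod (unitPerm x u c β) w = 2 * addOrderOf β :=
  minimalPeriod_blockPerm (Nat.succ_pos _) (by omega) _ c β w

theorem unitPerm_snd_ne {u : ℕ} (hu : u < 2 * x - 2) (c β : ZMod Q)
    (w : (ZMod 2 × ZMod Q) × ZMod x) : (unitPerm x u c β w).2 ≠ w.2 := fun h => by
  rw [unitPerm] at h
  have := eq_of_add_or_sub_eq (b := 0) (by omega) (Nat.zero_le x)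
    (blockPerm_snd (u / 4 + 1) (unitClass u) c β w)
    (Or.inl (by rw [h, Nat.cast_zero, add_zero]))
  omega

theorem unitPerm_injective {u u' : ℕ} (hu : u < 2 * x - 2) (hu' : u' < 2 * x - 2)
    {c c' β β' : ZMod Q} (hβ : u = u' → β = β') {w : (ZMod 2 × ZMod Q) × ZMod x}
    (h : unitPerm x u c β w = unitPerm x u' c' β' w) : u = u' ∧ c = c' := by
  rw [unitPerm, unitPerm] at h
  have hd : u / 4 = u' / 4 := by
    have h' := blockPerm_snd (u' / 4 + 1) (unitClass u') c' β' w
    rw [← h] at h'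
    have := eq_of_add_or_sub_eq (a := u / 4 + 1) (b := u' / 4 + 1) (by omega) (by omega)
      (blockPerm_snd _ _ c β w) h'
    omega
  by_contra hne
  refine blockPerm_ne (d := u / 4 + 1) (Nat.succ_pos _) (by omega)
    (fun _ => ⟨unitClass_fst_eq_zero (u := u) (by omega),
      unitClass_fst_eq_zero (u := u') (by omega)⟩)
    (fun he => ?_) w (by rwa [← hd] at h)
  obtain rfl := eq_of_unitClass_eq hd he
  exact ⟨hβ rfl, fun hc => hne ⟨rfl, hc⟩⟩

end Units

theorem ZMod.addOrderOf_natCast_div {N a : ℕ} [NeZero N] (ha : a ∣ N) :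
    addOrderOf ((N / a : ℕ) : ZMod N) = a := by
  rw [ZMod.addOrderOf_coe _ (NeZero.ne N), Nat.gcd_eq_right (Nat.div_dvd_of_dvd ha),
    Nat.div_div_self ha (NeZero.ne N)]

theorem two_mul_addOrderOf_natCast_div_half {Q ℓ : ℕ} [NeZero Q] (hℓ : Even ℓ) (hℓQ : ℓ / 2 ∣ Q) :
    2 * addOrderOf ((Q / (ℓ / 2) : ℕ) : ZMod Q) = ℓ := by
  rw [ZMod.addOrderOf_natCast_div hℓQ, Nat.two_mul_div_two_of_even hℓ]

theorem HWPStarSolution.exists_injective {v m n r s : ℕ} (hm : m ≠ 1) (hn : n ≠ 1)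
    (h : HWPStarSolution v m n r s) :
    ∃ σ : Fin (r + s) → Equiv.Perm (Fin v),
      (∀ i : Fin (r + s), (i : ℕ) < r → ∀ y, minimalPeriod (σ i) y = m) ∧
      (∀ i : Fin (r + s), r ≤ (i : ℕ) → ∀ y, minimalPeriod (σ i) y = n) ∧
      ∀ y, Injective fun i => σ i y := by
  obtain ⟨σ, hσm, hσn, huniq⟩ := h
  refine ⟨σ, hσm, hσn, fun y i j hij => ?_⟩
  have hfix : σ i y ≠ y := by
    rcases lt_or_ge (i : ℕ) r with hi | hi
    · exact apply_ne_self_of_minimalPeriod_ne_one (hσm i hi y ▸ hm)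
    · exact apply_ne_self_of_minimalPeriod_ne_one (hσn i hi y ▸ hn)
  exact (huniq y (σ i y) hfix.symm).unique rfl hij.symm

open scoped Classical in
theorem card_subtype_sumElim_val_lt {N M t k : ℕ} {α : Type*} [Fintype α] (ht : t ≤ N)
    (hk : k ≤ M) :
    Fintype.card {i : Fin N ⊕ (Fin M × α) //
      Sum.elim (fun j : Fin N => (j : ℕ) < t) (fun uc : Fin M × α => (uc.1 : ℕ) < k) i} =
      t + k * Fintype.card α := by
  rw [Fintype.card_congr (Equiv.subtypeSum.trans (Equiv.sumCongr
      (Equiv.refl {j : Fin N // (j : ℕ) < t})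
      (Equiv.prodSubtypeFstEquivSubtypeProd (p := fun u : Fin M => (u : ℕ) < k)))),
    Fintype.card_sum, Fintype.card_prod, Fintype.card_fin_lt_of_le ht,
    Fintype.card_fin_lt_of_le hk]

theorem two_mul_sub_two_mul_add_two_mul {x : ℕ} (hx : 0 < x) (Q : ℕ) :
    (2 * x - 2) * Q + 2 * Q = 2 * Q * x := by
  rw [← add_mul, Nat.sub_add_cancel (by omega)]; ring

theorem exists_eq_add_mul_of_le {r N Q M : ℕ} (hQ : Q ≤ N + 1) (hr : r ≤ N + M * Q) :
    ∃ t k, t ≤ N ∧ k ≤ M ∧ r = t + k * Q := by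
  by_cases h : M * Q ≤ r
  · exact ⟨r - M * Q, M, by omega, le_rfl, by omega⟩
  · have hQ0 : 0 < Q := Nat.pos_of_ne_zero fun h0 => by simp [h0] at h
    refine ⟨r % Q, r / Q, by have := Nat.mod_lt r hQ0; omega, ?_, ?_⟩
    · exact ((Nat.div_lt_iff_lt_mul hQ0).mpr (by omega)).le
    · rw [mul_comm, Nat.mod_add_div]

noncomputable def columnFamily {Q N : ℕ} (x : ℕ) [NeZero x] (eR : Fin (2 * Q) ≃ ZMod 2 × ZMod Q)
    (S : Fin N → Equiv.Perm (Fin (2 * Q))) (β : ℕ → ZMod Q) :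
    Fin N ⊕ (Fin (2 * x - 2) × ZMod Q) → Equiv.Perm ((ZMod 2 × ZMod Q) × ZMod x) :=
  Sum.elim (fun j => (eR.permCongr (S j)).prodCongr (Equiv.refl _))
    (fun uc => unitPerm x uc.1 uc.2 (β uc.1))

section ColumnFamily

variable {Q N x : ℕ} [NeZero x] (eR : Fin (2 * Q) ≃ ZMod 2 × ZMod Q)
  (S : Fin N → Equiv.Perm (Fin (2 * Q))) (β : ℕ → ZMod Q)

theorem minimalPeriod_columnFamily_inl (j : Fin N) (w : (ZMod 2 × ZMod Q) × ZMod x) :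
    minimalPeriod (columnFamily x eR S β (.inl j)) w = minimalPeriod (S j) (eR.symm w.1) := by
  simp only [columnFamily, Sum.elim_inl, Equiv.minimalPeriod_prodCongr_refl,
    Equiv.minimalPeriod_permCongr]

theorem minimalPeriod_columnFamily_inr (u : Fin (2 * x - 2)) (c : ZMod Q)
    (w : (ZMod 2 × ZMod Q) × ZMod x) :
    minimalPeriod (columnFamily x eR S β (.inr (u, c))) w = 2 * addOrderOf (β u) :=
  minimalPeriod_unitPerm u.2 _ _ w

theorem columnFamily_apply_injective (hS : ∀ y, Injective fun j => S j y)
    (w : (ZMod 2 × ZMod Q) × ZMod x) : Injective fun i => columnFamily x eR S β i w := by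
  rw [← Sum.elim_comp_inl_inr fun i => columnFamily x eR S β i w]
  refine Injective.sumElim
    (fun j j' h => hS (eR.symm w.1) (eR.injective (congrArg Prod.fst h))) ?_ ?_
  · rintro ⟨u, c⟩ ⟨u', c'⟩ h
    obtain ⟨hu, hc⟩ := unitPerm_injective u.2 u'.2 (fun h => by rw [h]) h
    exact Prod.ext (Fin.ext hu) hc
  · rintro j ⟨u, c⟩ h
    exact unitPerm_snd_ne u.2 c _ w (congrArg Prod.snd h).symm

end ColumnFamily

theorem hwpStarSolution_mul_of_split {m n Q x t k r s : ℕ} [NeZero Q] [NeZero x]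
    (hm : Even m) (hn : Even n) (hmQ : m / 2 ∣ Q) (hnQ : n / 2 ∣ Q)
    (ht : t ≤ 2 * Q - 1) (hk : k ≤ 2 * x - 2) (hr : r = t + k * Q)
    (hrs : r + s + 1 = 2 * Q * x) (hS : HWPStarSolution (2 * Q) m n t (2 * Q - 1 - t)) :
    HWPStarSolution (2 * Q * x) m n r s := by
  classical
  have hm1 : m ≠ 1 := by rintro rfl; exact Nat.not_even_one hm
  have hn1 : n ≠ 1 := by rintro rfl; exact Nat.not_even_one hn
  obtain ⟨S, hSm, hSn, hSinj⟩ := hS.exists_injective hm1 hn1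
  let eR : Fin (2 * Q) ≃ ZMod 2 × ZMod Q := Fintype.equivOfCardEq (by simp [ZMod.card])
  let β : ℕ → ZMod Q := fun u =>
    if u < k then ((Q / (m / 2) : ℕ) : ZMod Q) else ((Q / (n / 2) : ℕ) : ZMod Q)
  refine hwpStarSolution_of_injective (Fintype.equivFinOfCardEq (by simp [ZMod.card]))
    (columnFamily x eR S β) (Sum.elim (fun j => (j : ℕ) < t) (fun uc => (uc.1 : ℕ) < k)) ?_
    (by rw [card_subtype_sumElim_val_lt (by omega) hk, ZMod.card, hr])
    (by omega) hm1 hn1 ?_ ?_ (columnFamily_apply_injective eR S β hSinj)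
  · have := two_mul_sub_two_mul_add_two_mul (NeZero.pos x) Q
    have := NeZero.pos Q
    simp only [Fintype.card_sum, Fintype.card_prod, Fintype.card_fin, ZMod.card]
    omega
  · rintro (j | ⟨u, c⟩) hp w
    · exact (minimalPeriod_columnFamily_inl eR S β j w).trans (hSm j hp _)
    · rw [minimalPeriod_columnFamily_inr, show β u = _ from if_pos hp,
        two_mul_addOrderOf_natCast_div_half hm hmQ]
  · rintro (j | ⟨u, c⟩) hp w
    · exact (minimalPeriod_columnFamily_inl eR S β j w).trans (hSn j (not_lt.mp hp) _)
    · rw [minimalPeriod_columnFamily_inr, show β u = _ from if_neg hp,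
        two_mul_addOrderOf_natCast_div_half hn hnQ]

/-- Lemma 3.2 (main even construction): for even m, n ≥ 4 with h = lcm(m, n),
if HWP*(h; m^r', n^s') is solvable for all r' + s' = h - 1, then
HWP*(hx; m^r, n^s) is solvable for all x ≥ 1 and all r + s = hx - 1. -/
theorem hwpStar_even_construction (m n : ℕ) (hm : 4 ≤ m) (hn : 4 ≤ n)
    (hme : Even m) (hne : Even n)
    (h : ∀ r' s' : ℕ, r' + s' = Nat.lcm m n - 1 →
      HWPStarSolution (Nat.lcm m n) m n r' s') :
    ∀ x r s : ℕ, 0 < x → r + s = Nat.lcm m n * x - 1 →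
      HWPStarSolution (Nat.lcm m n * x) m n r s := by
  intro x r s hx hrs
  obtain ⟨Q, hQ⟩ : 2 ∣ Nat.lcm m n := hme.two_dvd.trans (Nat.dvd_lcm_left m n)
  have hQ0 : 0 < Q := by
    have := Nat.lcm_pos (show 0 < m by omega) (show 0 < n by omega)
    omega
  have : NeZero Q := ⟨hQ0.ne'⟩
  have : NeZero x := ⟨hx.ne'⟩
  have hdvd : ∀ a, Even a → a ∣ Nat.lcm m n → a / 2 ∣ Q := fun a ha haH => by
    simpa [hQ] using Nat.div_dvd_div ha.two_dvd haH
  have hQx := two_mul_sub_two_mul_add_two_mul hx Q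
  rw [hQ] at h hrs ⊢
  obtain ⟨t, k, ht, hk, hr⟩ :=
    exists_eq_add_mul_of_le (r := r) (Q := Q) (N := 2 * Q - 1) (M := 2 * x - 2)
      (by omega) (by omega)
  exact hwpStarSolution_mul_of_split hme hne (hdvd m hme (Nat.dvd_lcm_left m n))
    (hdvd n hne (Nat.dvd_lcm_right m n)) ht hk hr (by omega) (h t _ (by omega))
end

section
/- (Lemma 3.3.) Let m ≥ 2 be an even integer. Then: (a) there exist permutations σ_1, σ_2 of ZMod 2 × ZMod m, each fixed-point-free with all cycles of length m, such that (σ_k(i, a)).2 = a + 1 for all (i, a) and k ∈ {1, 2}, and for every i, j ∈ ZMod 2 and a ∈ ZMod m there is exactly one k ∈ {1, 2} with σ_k(i, a) = (j, a + 1); and (b) there exist permutations σ_1, σ_2 of ZMod 2 × ZMod m, each fixed-point-free with all cycles of length 2m, satisfying the same two conditions. (That is, the digraph C_m ≀ K̄_2 has both a directed C_m-factorization and a directed C_{2m}-factorization into two factors.) -/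
open Function Finset

/-!
Both factorizations consist of the two "voltage lifts" `(i, a) ↦ (i + f a + c, a + 1)`,
`c ∈ ZMod 2`, of the directed `m`-cycle, for a fixed `f : ZMod m → ZMod 2`; for given `i`, `a`
and target `j` exactly one `c` works, so every arc lies in exactly one factor. The `m`-th power of
such a lift adds the net voltage `∑ f + m • c = ∑ f` (as `m` is even) to the first coordinate,
so all its cycles have length `m` times the order of `∑ f`: this is `m` for `f = 0` and `2m` for
`f` the indicator of `0`.
-/

theorem Function.minimalPeriod_add_right {G : Type*} [AddGroup G] (s a : G) :
    minimalPeriod (· + s) a = addOrderOf s := by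
  rw [addOrderOf, minimalPeriod_eq_minimalPeriod_iff]
  intro n
  simp [IsPeriodicPt, IsFixedPt, add_right_iterate, add_left_iterate]

theorem Function.minimalPeriod_eq_mul_minimalPeriod_iterate {α : Type*} {f : α → α} {x : α}
    {n : ℕ} (hn : n ∣ minimalPeriod f x) : minimalPeriod f x = n * minimalPeriod f^[n] x := by
  rcases eq_or_ne n 0 with rfl | hn0
  · simpa using hn
  · rw [minimalPeriod_iterate_eq_div_gcd hn0, Nat.gcd_eq_right hn, Nat.mul_div_cancel' hn]

theorem ZMod.sum_range_add {M : Type*} [AddCommMonoid M] (m : ℕ) [NeZero m] (g : ZMod m → M)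
    (a : ZMod m) : ∑ t ∈ range m, g (a + t) = ∑ x, g x := by
  obtain ⟨k, rfl⟩ := Nat.exists_eq_succ_of_ne_zero (NeZero.ne m)
  rw [sum_range fun t ↦ g (a + t)]
  exact Fintype.sum_equiv (Equiv.addLeft a) _ _ fun i ↦
    congrArg (g <| a + ·) (ZMod.natCast_zmod_val (n := k + 1) i)

section SkewShift

variable {G : Type*} [AddCommGroup G] {m : ℕ}

def skewShift (f : ZMod m → G) (c : G) : Equiv.Perm (G × ZMod m) where
  toFun p := (p.1 + f p.2 + c, p.2 + 1)
  invFun p := (p.1 - f (p.2 - 1) - c, p.2 - 1)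
  left_inv p := by simp [sub_sub, add_assoc]
  right_inv p := by simp [sub_sub, add_assoc]

@[simp]
theorem skewShift_apply (f : ZMod m → G) (c : G) (p : G × ZMod m) :
    skewShift f c p = (p.1 + f p.2 + c, p.2 + 1) := rfl

theorem skewShift_iterate (f : ZMod m → G) (c : G) (n : ℕ) (p : G × ZMod m) :
    (skewShift f c)^[n] p = (p.1 + ∑ t ∈ range n, f (p.2 + t) + n • c, p.2 + n) := by
  induction n with
  | zero => simp
  | succ n ih =>
    rw [iterate_succ_apply', ih, skewShift_apply, sum_range_succ, succ_nsmul]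
    simp only [Nat.cast_succ, Prod.mk.injEq]
    constructor <;> abel

theorem skewShift_iterate_self [NeZero m] (f : ZMod m → G) (c : G) :
    (skewShift f c)^[m] = Prod.map (· + (∑ x, f x + m • c)) id := by
  ext p <;> simp [skewShift_iterate, ZMod.sum_range_add, add_assoc]

theorem minimalPeriod_skewShift [NeZero m] (f : ZMod m → G) (c : G) (p : G × ZMod m) :
    minimalPeriod (skewShift f c) p = m * addOrderOf (∑ x, f x + m • c) := by
  have hsnd : Semiconj Prod.snd (skewShift f c) (· + 1) := fun _ ↦ rfl
  have hdvd : m ∣ minimalPeriod (skewShift f c) p := by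
    simpa [minimalPeriod_add_right, ZMod.addOrderOf_one] using
      ((isPeriodicPt_minimalPeriod _ p).map hsnd).minimalPeriod_dvd
  rw [minimalPeriod_eq_mul_minimalPeriod_iterate hdvd, skewShift_iterate_self,
    minimalPeriod_prodMap, minimalPeriod_add_right, minimalPeriod_id, Nat.lcm_one_right]

theorem existsUnique_skewShift_eq (f : ZMod m → G) (i j : G) (a : ZMod m) :
    ∃! c, skewShift f c (i, a) = (j, a + 1) := by
  refine ⟨j - i - f a, by simp, fun c hc ↦ ?_⟩
  simp only [skewShift_apply, Prod.mk.injEq, and_true] at hc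
  rw [← hc]
  abel

end SkewShift

theorem exists_wreath_factorization_of_voltage {m : ℕ} [NeZero m] (hme : Even m)
    (f : ZMod m → ZMod 2) (ℓ : ℕ) (hℓ : m * addOrderOf (∑ x, f x) = ℓ) :
    ∃ σ : Fin 2 → Equiv.Perm (ZMod 2 × ZMod m),
      (∀ k p, minimalPeriod ⇑(σ k) p = ℓ) ∧
      (∀ k p, (σ k p).2 = p.2 + 1) ∧
      (∀ (i j : ZMod 2) (a : ZMod m), ∃! k, σ k (i, a) = (j, a + 1)) := by
  have hnsmul : ∀ c : ZMod 2, m • c = 0 := by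
    obtain ⟨r, rfl⟩ := hme
    intro c
    rw [← two_mul, mul_nsmul, two_nsmul, CharTwo.add_self_eq_zero, nsmul_zero]
  refine ⟨fun k ↦ skewShift f (ZMod.finEquiv 2 k), fun k p ↦ ?_, fun _ _ ↦ rfl,
    fun i j a ↦
      (ZMod.finEquiv 2).existsUnique_congr_right.mpr (existsUnique_skewShift_eq f i j a)⟩
  rw [minimalPeriod_skewShift, hnsmul, add_zero, hℓ]

/-- Lemma 3.3: for even `m ≥ 2`, the digraph `C_m ≀ K̄_2` (vertices
`ZMod 2 × ZMod m`, arcs `((i, a), (j, a + 1))`) has both a directed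
`C_m`-factorization and a directed `C_(2m)`-factorization into two factors.
Each factor is a permutation moving along arcs, fixed-point-free with all
cycles of the prescribed length (every point has that minimal period), and
every arc lies in exactly one of the two factors. -/
theorem cycle_wreath_factorization (m : ℕ) (hm : 2 ≤ m) (hme : Even m) :
    (∃ σ : Fin 2 → Equiv.Perm (ZMod 2 × ZMod m),
      (∀ k p, Function.minimalPeriod ⇑(σ k) p = m) ∧
      (∀ k p, (σ k p).2 = p.2 + 1) ∧
      (∀ (i j : ZMod 2) (a : ZMod m), ∃! k, σ k (i, a) = (j, a + 1))) ∧
    (∃ σ : Fin 2 → Equiv.Perm (ZMod 2 × ZMod m),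
      (∀ k p, Function.minimalPeriod ⇑(σ k) p = 2 * m) ∧
      (∀ k p, (σ k p).2 = p.2 + 1) ∧
      (∀ (i j : ZMod 2) (a : ZMod m), ∃! k, σ k (i, a) = (j, a + 1))) := by
  have : NeZero m := ⟨by omega⟩
  exact ⟨exists_wreath_factorization_of_voltage hme 0 m (by simp),
    exists_wreath_factorization_of_voltage hme (Pi.single 0 1) (2 * m)
      (by simp [ZMod.addOrderOf_one, mul_comm])⟩
end

section
/- (Lemma 3.4.) Let m ≥ 2 be an integer. Then there exist permutations σ_1, σ_2, σ_3 of ZMod 2 × ZMod m such that: σ_1 is fixed-point-free with all cycles of length m; σ_2 and σ_3 are fixed-point-free with all cycles of length 2m; for each k ∈ {1, 2, 3} and every vertex (i, a), either (σ_k(i, a)).2 = a + 1, or (σ_k(i, a)).2 = a and (σ_k(i, a)).1 ≠ i; and for every arc (p, q) of Γ_m there is exactly one k ∈ {1, 2, 3} with σ_k(p) = q. (That is, Γ_m has a factorization into one directed C_m-factor and two directed C_{2m}-factors.) -/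
/-!
The first factor is the shift `(i, a) ↦ (i, a + 1)`, whose cycles have length `m`. The other two
are the maps `(i, a) ↦ (i + 1, a + [i = c])` for the two levels `c`: each toggles the level and
squares to the shift, so its cycles have length `2m`. Out of `(i, a)` the three factors use the
three arcs `(i, a + 1)`, `(i + 1, a + 1)`, `(i + 1, a)`, which are distinct because `1 ≠ 0` in
`ZMod m`.
-/

open Function

theorem Function.minimalPeriod_add_right_s6 {M : Type*} [AddMonoid M] [IsLeftCancelAdd M]
    (a x : M) : minimalPeriod (· + a) x = addOrderOf a :=
  Nat.dvd_right_iff_eq.mp fun n => by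
    simp [← isPeriodicPt_iff_minimalPeriod_dvd, addOrderOf_dvd_iff_nsmul_eq_zero, IsPeriodicPt,
      IsFixedPt, add_right_iterate]

theorem Function.Semiconj.minimalPeriod_eq_two_mul {α β : Type*} {f : α → α} {g : β → β}
    {π : α → β} (h : Semiconj π f g) {x : α} (hg : minimalPeriod g (π x) = 2) :
    minimalPeriod f x = 2 * minimalPeriod f^[2] x := by
  have two_dvd : 2 ∣ minimalPeriod f x :=
    hg ▸ ((isPeriodicPt_minimalPeriod f x).map h).minimalPeriod_dvd
  rw [minimalPeriod_iterate_eq_div_gcd two_ne_zero, Nat.gcd_eq_right two_dvd,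
    Nat.mul_div_cancel' two_dvd]

theorem ZMod.eq_add_one_of_ne_mod_two {i j : ZMod 2} (h : j ≠ i) : j = i + 1 := by
  revert i j; decide

theorem ZMod.add_one_add_one_mod_two (i : ZMod 2) : i + 1 + 1 = i := by
  revert i; decide

namespace GammaDigraph

variable {m : ℕ}

def IsArc (p q : ZMod 2 × ZMod m) : Prop := q.2 = p.2 + 1 ∨ (q.2 = p.2 ∧ q.1 ≠ p.1)

def shift : Equiv.Perm (ZMod 2 × ZMod m) :=
  (Equiv.refl (ZMod 2)).prodCongr (Equiv.addRight 1)

theorem coe_shift : ⇑(shift (m := m)) = Prod.map id (· + 1) := rfl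

theorem minimalPeriod_shift (p : ZMod 2 × ZMod m) : minimalPeriod shift p = m := by
  rw [coe_shift, minimalPeriod_prodMap, minimalPeriod_id, minimalPeriod_add_right_s6,
    ZMod.addOrderOf_one, Nat.lcm_one_left]

theorem isArc_shift (p : ZMod 2 × ZMod m) : IsArc p (shift p) := Or.inl rfl

def zigzag (c : ZMod 2) (p : ZMod 2 × ZMod m) : ZMod 2 × ZMod m :=
  (p.1 + 1, if p.1 = c then p.2 + 1 else p.2)

theorem zigzag_self (c : ZMod 2) (a : ZMod m) : zigzag c (c, a) = (c + 1, a + 1) := by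
  simp [zigzag]

theorem zigzag_of_ne {c i : ZMod 2} (h : i ≠ c) (a : ZMod m) : zigzag c (i, a) = (i + 1, a) := by
  simp [zigzag, h]

theorem zigzag_ne_shift (c : ZMod 2) (p : ZMod 2 × ZMod m) : zigzag c p ≠ shift p :=
  fun h => add_ne_left.mpr one_ne_zero (congrArg Prod.fst h)

theorem zigzag_comp_zigzag (c : ZMod 2) : zigzag (m := m) c ∘ zigzag c = shift := by
  funext ⟨i, a⟩
  rcases eq_or_ne i c with rfl | h
  · rw [comp_apply, zigzag_self, zigzag_of_ne (add_ne_left.mpr one_ne_zero),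
      ZMod.add_one_add_one_mod_two]
    rfl
  · obtain rfl := ZMod.eq_add_one_of_ne_mod_two h.symm
    rw [comp_apply, zigzag_of_ne h, zigzag_self, ZMod.add_one_add_one_mod_two]
    rfl

theorem minimalPeriod_zigzag (c : ZMod 2) (p : ZMod 2 × ZMod m) :
    minimalPeriod (zigzag c) p = 2 * m := by
  have hfst : Semiconj Prod.fst (zigzag (m := m) c) (· + 1) := fun _ => rfl
  rw [hfst.minimalPeriod_eq_two_mul (by rw [minimalPeriod_add_right_s6, ZMod.addOrderOf_one]),
    iterate_succ, iterate_one, zigzag_comp_zigzag, minimalPeriod_shift]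

theorem isArc_zigzag (c : ZMod 2) (p : ZMod 2 × ZMod m) : IsArc p (zigzag c p) := by
  by_cases h : p.1 = c
  · exact Or.inl (if_pos h)
  · exact Or.inr ⟨if_neg h, add_ne_left.mpr one_ne_zero⟩

theorem zigzag_left_injective (hm : (1 : ZMod m) ≠ 0) (p : ZMod 2 × ZMod m) :
    Injective fun c => zigzag c p := by
  intro c c' h
  replace h := congrArg Prod.snd h
  simp only [zigzag] at h
  by_cases hc : p.1 = c <;> by_cases hc' : p.1 = c'
  · exact hc.symm.trans hc'
  · rw [if_pos hc, if_neg hc'] at h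
    exact absurd h (add_ne_left.mpr hm)
  · rw [if_neg hc, if_pos hc'] at h
    exact absurd h.symm (add_ne_left.mpr hm)
  · rw [ZMod.eq_add_one_of_ne_mod_two (Ne.symm hc), ZMod.eq_add_one_of_ne_mod_two (Ne.symm hc')]

noncomputable def zigzagPerm (c : ZMod 2) : Equiv.Perm (ZMod 2 × ZMod m) :=
  Equiv.ofBijective (zigzag c) <| by
    have h := zigzag_comp_zigzag (m := m) c ▸ shift.bijective
    exact ⟨h.injective.of_comp, h.surjective.of_comp⟩

theorem coe_zigzagPerm (c : ZMod 2) : ⇑(zigzagPerm (m := m) c) = zigzag c := rfl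

noncomputable def factor : Fin 3 → Equiv.Perm (ZMod 2 × ZMod m) :=
  ![shift, zigzagPerm 0, zigzagPerm 1]

theorem exists_factor_eq_zigzagPerm (c : ZMod 2) : ∃ k, factor (m := m) k = zigzagPerm c := by
  fin_cases c
  exacts [⟨1, rfl⟩, ⟨2, rfl⟩]

theorem isArc_factor (k : Fin 3) (p : ZMod 2 × ZMod m) : IsArc p (factor k p) := by
  fin_cases k
  exacts [isArc_shift p, isArc_zigzag 0 p, isArc_zigzag 1 p]

theorem exists_factor_eq_of_isArc {p q : ZMod 2 × ZMod m} (h : IsArc p q) :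
    ∃ k, factor k p = q := by
  obtain ⟨i, a⟩ := p
  obtain ⟨j, b⟩ := q
  have of_zigzag (c : ZMod 2) (hc : zigzag c (i, a) = (j, b)) : ∃ k, factor k (i, a) = (j, b) :=
    (exists_factor_eq_zigzagPerm c).imp fun k hk => by rw [hk]; exact hc
  rcases h with rfl | ⟨rfl, hj⟩
  · rcases eq_or_ne j i with rfl | hj
    · exact ⟨0, rfl⟩
    · exact of_zigzag i (ZMod.eq_add_one_of_ne_mod_two hj ▸ zigzag_self i a)
  · exact of_zigzag (i + 1)
      (ZMod.eq_add_one_of_ne_mod_two hj ▸ zigzag_of_ne (add_ne_left.mpr one_ne_zero).symm _)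

theorem factor_injective (hm : (1 : ZMod m) ≠ 0) (p : ZMod 2 × ZMod m) :
    Injective fun k => factor k p := by
  have h01 : zigzag 0 p ≠ zigzag 1 p := (zigzag_left_injective hm p).ne (by decide)
  simp [Injective, Fin.forall_fin_succ, factor, coe_zigzagPerm, zigzag_ne_shift,
    (zigzag_ne_shift _ _).symm, h01, h01.symm]

end GammaDigraph

open GammaDigraph

/-- Lemma 3.4: for `m ≥ 2`, the digraph `Γ_m = (C_m ≀ K̄_2) ⊕ m K_2^*`
(vertices `ZMod 2 × ZMod m`, arcs `((i, a), (j, b))` with `b = a + 1`, or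
`b = a` and `j ≠ i`) has a factorization into one directed `C_m`-factor and
two directed `C_(2m)`-factors. -/
theorem gamma_factorization (m : ℕ) (hm : 2 ≤ m) :
    ∃ σ : Fin 3 → Equiv.Perm (ZMod 2 × ZMod m),
      (∀ p, Function.minimalPeriod ⇑(σ 0) p = m) ∧
      (∀ k : Fin 3, k ≠ 0 → ∀ p, Function.minimalPeriod ⇑(σ k) p = 2 * m) ∧
      (∀ k p, (σ k p).2 = p.2 + 1 ∨ ((σ k p).2 = p.2 ∧ (σ k p).1 ≠ p.1)) ∧
      (∀ p q : ZMod 2 × ZMod m, (q.2 = p.2 + 1 ∨ (q.2 = p.2 ∧ q.1 ≠ p.1)) →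
        ∃! k, σ k p = q) := by
  have : Fact (1 < m) := ⟨hm⟩
  refine ⟨factor, minimalPeriod_shift, ?_, isArc_factor, fun p q hpq => ?_⟩
  · intro k hk p
    fin_cases k
    · exact absurd rfl hk
    · exact minimalPeriod_zigzag 0 p
    · exact minimalPeriod_zigzag 1 p
  · obtain ⟨k, rfl⟩ := exists_factor_eq_of_isArc hpq
    exact ⟨k, rfl, fun l hl => factor_injective one_ne_zero p hl⟩
end

section
/- (Lemma 3.5.) For all nonnegative integers r and s, there exists a solution to HWP*(8; 4^r, 8^s) if and only if r + s = 7. -/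
open Equiv Function List

theorem Equiv.Perm.minimalPeriod_eq_prime_pow {α : Type*} {p k : ℕ} [Fact p.Prime]
    {σ : Perm α} {x : α} (hk1 : (σ ^ p ^ (k + 1)) x = x) (hk : (σ ^ p ^ k) x ≠ x) :
    minimalPeriod σ x = p ^ (k + 1) :=
  Function.minimalPeriod_eq_prime_pow (by rwa [IsPeriodicPt, IsFixedPt, ← Perm.coe_pow])
    (by rwa [IsPeriodicPt, IsFixedPt, ← Perm.coe_pow])

namespace HWPStarSolution

theorem add_add_one_eq {v m n r s : ℕ} (h : HWPStarSolution v m n r s) (hm : m ≠ 1)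
    (hn : n ≠ 1) (hv : v ≠ 0) : r + s + 1 = v := by
  obtain ⟨σ, hσm, hσn, hσ⟩ := h
  have hfree : ∀ i x, σ i x ≠ x := fun i x hx => by
    have h1 := minimalPeriod_eq_one_iff_isFixedPt.2 hx
    rcases lt_or_ge (i : ℕ) r with hi | hi
    · exact hm (hσm i hi x ▸ h1)
    · exact hn (hσn i hi x ▸ h1)
  let x : Fin v := ⟨0, Nat.pos_of_ne_zero hv⟩
  let arcFrom : Fin (r + s) ≃ {y // y ≠ x} := Equiv.ofBijective (fun i => ⟨σ i x, hfree i x⟩)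
    ⟨fun i j hij => (hσ x _ (hfree i x).symm).unique rfl (congrArg Subtype.val hij).symm,
      fun y => (hσ x y y.2.symm).exists.imp fun _ hi => Subtype.ext hi⟩
  have hcard := Fintype.card_congr arcFrom
  simp only [Fintype.card_fin, Fintype.card_subtype_compl, Fintype.card_unique] at hcard
  omega

theorem of_prime_pow {p a b v k r s : ℕ} [Fact p.Prime] (hk : r + s = k)
    (σ : Fin k → Perm (Fin v))
    (hr : ∀ i : Fin k, (i : ℕ) < r → ∀ x, (σ i ^ p ^ (a + 1)) x = x ∧ (σ i ^ p ^ a) x ≠ x)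
    (hs : ∀ i : Fin k, r ≤ (i : ℕ) → ∀ x, (σ i ^ p ^ (b + 1)) x = x ∧ (σ i ^ p ^ b) x ≠ x)
    (hsurj : ∀ x y, x ≠ y → ∃ i, σ i x = y) (hinj : ∀ x, Injective fun i => σ i x) :
    HWPStarSolution v (p ^ (a + 1)) (p ^ (b + 1)) r s := by
  subst hk
  refine ⟨σ, fun i hi x => ?_, fun i hi x => ?_, fun x y hxy => ?_⟩
  · exact Perm.minimalPeriod_eq_prime_pow (hr i hi x).1 (hr i hi x).2
  · exact Perm.minimalPeriod_eq_prime_pow (hs i hi x).1 (hs i hi x).2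
  · obtain ⟨i, hi⟩ := hsurj x y hxy
    exact ⟨i, hi, fun j hj => hinj x (hj.trans hi.symm)⟩

end HWPStarSolution

def hwpStarFamily : Fin 8 → Fin 7 → Perm (Fin 8) :=
  ![![formPerm [0, 6, 7, 2, 1, 3, 5, 4],
      formPerm [0, 3, 1, 2, 4, 5, 7, 6],
      formPerm [0, 1, 5, 6, 4, 3, 2, 7],
      formPerm [0, 5, 1, 7, 4, 6, 2, 3],
      formPerm [0, 2, 6, 5, 3, 4, 7, 1],
      formPerm [0, 7, 3, 6, 1, 4, 2, 5],
      formPerm [0, 4, 1, 6, 3, 7, 5, 2]],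
    ![formPerm [0, 2, 6, 7] * formPerm [1, 5, 3, 4],
      formPerm [0, 7, 2, 1, 3, 6, 5, 4],
      formPerm [0, 6, 1, 7, 4, 5, 2, 3],
      formPerm [0, 3, 1, 4, 6, 2, 7, 5],
      formPerm [0, 1, 2, 4, 3, 5, 7, 6],
      formPerm [0, 4, 2, 5, 6, 3, 7, 1],
      formPerm [0, 5, 1, 6, 4, 7, 3, 2]],
    ![formPerm [0, 1, 3, 2] * formPerm [4, 7, 5, 6],
      formPerm [0, 5, 1, 4] * formPerm [2, 6, 3, 7],
      formPerm [0, 7, 3, 1, 2, 5, 4, 6],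
      formPerm [0, 4, 1, 7, 6, 2, 3, 5],
      formPerm [0, 3, 4, 2, 1, 6, 5, 7],
      formPerm [0, 2, 4, 5, 3, 6, 7, 1],
      formPerm [0, 6, 1, 5, 2, 7, 4, 3]],
    ![formPerm [0, 4, 2, 1] * formPerm [3, 6, 7, 5],
      formPerm [0, 5, 4, 3] * formPerm [1, 7, 2, 6],
      formPerm [0, 3, 5, 7] * formPerm [1, 6, 2, 4],
      formPerm [0, 2, 7, 1, 3, 4, 6, 5],
      formPerm [0, 7, 6, 3, 2, 5, 1, 4],
      formPerm [0, 1, 2, 3, 7, 4, 5, 6],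
      formPerm [0, 6, 4, 7, 3, 1, 5, 2]],
    ![formPerm [0, 1, 3, 6] * formPerm [2, 7, 5, 4],
      formPerm [0, 6, 1, 7] * formPerm [2, 4, 3, 5],
      formPerm [0, 3, 4, 5] * formPerm [1, 6, 7, 2],
      formPerm [0, 5, 6, 4] * formPerm [1, 2, 3, 7],
      formPerm [0, 7, 4, 6, 2, 5, 3, 1],
      formPerm [0, 4, 1, 5, 7, 6, 3, 2],
      formPerm [0, 2, 6, 5, 1, 4, 7, 3]],
    ![formPerm [0, 6, 7, 5] * formPerm [1, 4, 2, 3],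
      formPerm [0, 2, 7, 1] * formPerm [3, 5, 6, 4],
      formPerm [0, 5, 1, 2] * formPerm [3, 4, 7, 6],
      formPerm [0, 4, 5, 3] * formPerm [1, 7, 2, 6],
      formPerm [0, 1, 3, 7] * formPerm [2, 4, 6, 5],
      formPerm [0, 3, 2, 5, 7, 4, 1, 6],
      formPerm [0, 7, 3, 6, 2, 1, 5, 4]],
    ![formPerm [0, 2, 1, 7] * formPerm [3, 5, 6, 4],
      formPerm [0, 5, 2, 6] * formPerm [1, 3, 7, 4],
      formPerm [0, 1, 6, 5] * formPerm [2, 4, 7, 3],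
      formPerm [0, 4, 6, 3] * formPerm [1, 2, 7, 5],
      formPerm [0, 3, 6, 2] * formPerm [1, 4, 5, 7],
      formPerm [0, 7, 6, 1] * formPerm [2, 5, 3, 4],
      formPerm [0, 6, 7, 2, 3, 1, 5, 4]],
    ![formPerm [0, 7, 6, 4] * formPerm [1, 3, 2, 5],
      formPerm [0, 5, 4, 6] * formPerm [1, 2, 3, 7],
      formPerm [0, 1, 4, 3] * formPerm [2, 6, 5, 7],
      formPerm [0, 4, 2, 7] * formPerm [1, 5, 6, 3],
      formPerm [0, 3, 5, 2] * formPerm [1, 6, 7, 4],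
      formPerm [0, 6, 2, 1] * formPerm [3, 4, 7, 5],
      formPerm [0, 2, 4, 5] * formPerm [1, 7, 3, 6]]]

theorem hwpStarFamily_spec : ∀ r : Fin 8,
    (∀ i : Fin 7, (i : ℕ) < r → ∀ x,
      (hwpStarFamily r i ^ 4) x = x ∧ (hwpStarFamily r i ^ 2) x ≠ x) ∧
    (∀ i : Fin 7, (r : ℕ) ≤ i → ∀ x,
      (hwpStarFamily r i ^ 8) x = x ∧ (hwpStarFamily r i ^ 4) x ≠ x) ∧
    (∀ x y, x ≠ y → ∃ i, hwpStarFamily r i x = y) ∧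
    (∀ x, Injective fun i => hwpStarFamily r i x) := by
  decide +kernel

/-- HWP*(8; 4^r, 8^s) has a solution if and only if r + s = 7. -/
theorem hwpStar_8_4_8 (r s : ℕ) :
    HWPStarSolution 8 4 8 r s ↔ r + s = 7 := by
  refine ⟨fun h => by simpa using h.add_add_one_eq (by norm_num) (by norm_num) (by norm_num),
    fun h => ?_⟩
  have hr : r < 8 := by omega
  obtain ⟨h4, h8, hsurj, hinj⟩ := hwpStarFamily_spec ⟨r, hr⟩
  exact HWPStarSolution.of_prime_pow (p := 2) (a := 1) (b := 2) h _ h4 h8 hsurj hinj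
end

section
/- (Lemma 3.6, case (6,12).) For all nonnegative integers r and s, there exists a solution to HWP*(12; 6^r, 12^s) if and only if r + s = 11. -/
open Function Equiv

theorem apply_ne_of_minimalPeriod_ne_one {α : Type*} {f : α → α} {x : α}
    (h : minimalPeriod f x ≠ 1) : f x ≠ x :=
  fun hx => h (minimalPeriod_eq_one_iff_isFixedPt.mpr hx)

theorem Equiv.minimalPeriod_permCongr_apply {α β : Type*} (e : α ≃ β) (p : Perm α) (x : α) :
    minimalPeriod (e.permCongr p) (e x) = minimalPeriod p x := by
  have hconj : Semiconj e p (e.permCongr p) := fun z => by simp [permCongr_apply]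
  rw [minimalPeriod_eq_minimalPeriod_iff]
  intro k
  simp only [IsPeriodicPt, IsFixedPt, ← (hconj.iterate_right k) x, e.apply_eq_iff_eq]

theorem ZMod.minimalPeriod_add_one {m : ℕ} (j : ZMod m) : minimalPeriod (· + 1) j = m := by
  refine Nat.dvd_right_iff_eq.mp fun k => ?_
  rw [← isPeriodicPt_iff_minimalPeriod_dvd, IsPeriodicPt, IsFixedPt, add_right_iterate_apply,
    add_eq_left, nsmul_one, ZMod.natCast_eq_zero_iff]

section PermOfCycles

variable {α : Type*} {q m : ℕ} (C : Fin q → ZMod m → α) (hC : Bijective (uncurry C))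

noncomputable def permOfCycles : Perm α :=
  (Equiv.ofBijective _ hC).permCongr ((Equiv.refl _).prodCongr (Equiv.addRight 1))

theorem permOfCycles_apply (c : Fin q) (j : ZMod m) :
    permOfCycles C hC (C c j) = C c (j + 1) := by
  rw [permOfCycles, permCongr_apply]
  exact congrArg (Equiv.ofBijective _ hC)
    (congrArg _ ((Equiv.ofBijective _ hC).symm_apply_apply (c, j)))

theorem permOfCycles_apply_eq_iff {x y : α} :
    permOfCycles C hC x = y ↔ ∃ c j, C c j = x ∧ C c (j + 1) = y := by
  obtain ⟨⟨c, j⟩, rfl⟩ := hC.2 x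
  refine ⟨fun h => ⟨c, j, rfl, (permOfCycles_apply C hC c j).symm.trans h⟩, ?_⟩
  rintro ⟨c', j', hx, rfl⟩
  obtain ⟨rfl, rfl⟩ := Prod.ext_iff.mp (@hC.1 (c', j') (c, j) hx)
  exact permOfCycles_apply C hC c' j'

theorem minimalPeriod_permOfCycles (x : α) : minimalPeriod (permOfCycles C hC) x = m := by
  obtain ⟨z, rfl⟩ := (Equiv.ofBijective _ hC).surjective x
  rw [permOfCycles, Equiv.minimalPeriod_permCongr_apply, prodCongr_apply, minimalPeriod_prodMap]
  simp [ZMod.minimalPeriod_add_one]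

end PermOfCycles

section ArcCount

open Fintype

variable {ι V : Type*} [Fintype ι] [Fintype V] [DecidableEq V]

theorem Fintype.card_subtype_fst_ne_snd :
    card {p : V × V // p.1 ≠ p.2} = card V * card V - card V := by
  rw [Fintype.card_subtype, ← Finset.card_univ, ← Finset.offDiag_card]
  congr 1
  ext
  simp

theorem forall_existsUnique_apply_eq_iff (σ : ι → Perm V) (hσ : ∀ i x, σ i x ≠ x) :
    (∀ x y, x ≠ y → ∃! i, σ i x = y) ↔ (∀ x y, x ≠ y → ∃ i, σ i x = y) ∧
      card ι * card V = card V * card V - card V := by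
  let arc : ι × V → {p : V × V // p.1 ≠ p.2} := fun ix =>
    ⟨(ix.2, σ ix.1 ix.2), (hσ ix.1 ix.2).symm⟩
  have hsurj : Surjective arc ↔ ∀ x y, x ≠ y → ∃ i, σ i x = y := by
    refine ⟨fun h x y hxy => ?_, fun h ⟨(x, y), hxy⟩ => ?_⟩
    · obtain ⟨⟨i, x'⟩, hi⟩ := h ⟨(x, y), hxy⟩
      obtain ⟨rfl, rfl⟩ := Prod.ext_iff.mp (congrArg Subtype.val hi)
      exact ⟨i, rfl⟩
    · obtain ⟨i, rfl⟩ := h x y hxy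
      exact ⟨(i, x), rfl⟩
  have hbij : Bijective arc ↔ ∀ x y, x ≠ y → ∃! i, σ i x = y := by
    refine ⟨fun h x y hxy => ?_, fun h => ⟨fun ⟨i, x⟩ ⟨j, x'⟩ hij => ?_,
      hsurj.mpr fun x y hxy => (h x y hxy).exists⟩⟩
    · obtain ⟨i, hi⟩ := hsurj.mp h.2 x y hxy
      refine ⟨i, hi, fun j hj => ?_⟩
      exact congrArg Prod.fst
        (h.1 (a₁ := (j, x)) (a₂ := (i, x)) (Subtype.ext (by simp [arc, hi, hj])))
    · obtain ⟨rfl, hx⟩ := Prod.ext_iff.mp (congrArg Subtype.val hij)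
      rw [(h x _ (hσ i x).symm).unique rfl hx.symm]
  rw [← hbij, ← hsurj, Fintype.bijective_iff_surjective_and_card, ← card_subtype_fst_ne_snd,
    card_prod]

end ArcCount

theorem HWPStarSolution.card_mul_eq {v m n r s : ℕ} (h : HWPStarSolution v m n r s)
    (hm : m ≠ 1) (hn : n ≠ 1) : (r + s) * v = v * v - v := by
  obtain ⟨σ, hshort, hlong, hunique⟩ := h
  have hσ : ∀ i x, σ i x ≠ x := fun i x => apply_ne_of_minimalPeriod_ne_one <| by
    rcases lt_or_ge (i : ℕ) r with hi | hi
    · rwa [hshort i hi x]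
    · rwa [hlong i hi x]
  simpa using ((forall_existsUnique_apply_eq_iff σ hσ).mp hunique).2

theorem hwpStarSolution_of_cycles {v m n p q r s : ℕ}
    (hm : m ≠ 1) (hn : n ≠ 1)
    (A : Fin r → Fin p → ZMod m → Fin v) (B : Fin s → Fin q → ZMod n → Fin v)
    (hA : ∀ i, Bijective (uncurry (A i))) (hB : ∀ i, Bijective (uncurry (B i)))
    (hcover : ∀ x y, x ≠ y → (∃ i c j, A i c j = x ∧ A i c (j + 1) = y) ∨
      ∃ i c j, B i c j = x ∧ B i c (j + 1) = y)
    (hcard : (r + s) * v = v * v - v) :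
    HWPStarSolution v m n r s := by
  let σ : Fin (r + s) → Perm (Fin v) :=
    Fin.append (fun i => permOfCycles (A i) (hA i)) (fun i => permOfCycles (B i) (hB i))
  have hperiod : ∀ i x, minimalPeriod (σ i) x = if (i : ℕ) < r then m else n := by
    intro i x
    refine Fin.addCases (fun i => ?_) (fun i => ?_) i <;> simp [σ, minimalPeriod_permOfCycles]
  have hσ : ∀ i x, σ i x ≠ x := fun i x => apply_ne_of_minimalPeriod_ne_one <| by
    rw [hperiod]; split_ifs <;> assumption
  refine ⟨σ, fun i hi x => by simp [hperiod, hi], fun i hi x => by simp [hperiod, hi.not_gt],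
    (forall_existsUnique_apply_eq_iff σ hσ).mpr ⟨fun x y hxy => ?_, by simpa using hcard⟩⟩
  rcases hcover x y hxy with ⟨i, hi⟩ | ⟨i, hi⟩
  · exact ⟨Fin.castAdd s i, by simpa [σ, permOfCycles_apply_eq_iff] using hi⟩
  · exact ⟨Fin.natAdd r i, by simpa [σ, permOfCycles_apply_eq_iff] using hi⟩

/-- The cycles of the `r` hexagon factors and of the `11 - r` Hamilton cycles of a solution of
HWP*(12; 6^r, 12^(11-r)). -/
def decomposition (r : Fin 12) :
    (Fin r → Fin 2 → ZMod 6 → Fin 12) × (Fin (11 - r) → ZMod 12 → Fin 12) :=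
  match r with
  | 0 =>
    (![],
     ![![0, 10, 2, 11, 6, 4, 5, 9, 3, 8, 7, 1],
      ![0, 1, 3, 11, 5, 6, 7, 4, 8, 2, 9, 10],
      ![0, 7, 8, 10, 6, 3, 5, 4, 1, 11, 9, 2],
      ![0, 6, 8, 5, 1, 4, 2, 10, 3, 9, 11, 7],
      ![0, 3, 2, 4, 10, 1, 7, 6, 11, 8, 9, 5],
      ![0, 8, 6, 2, 7, 5, 3, 10, 11, 1, 9, 4],
      ![0, 2, 6, 10, 7, 3, 4, 9, 8, 1, 5, 11],
      ![0, 5, 7, 10, 4, 11, 2, 3, 6, 9, 1, 8],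
      ![0, 4, 6, 1, 2, 5, 10, 8, 11, 3, 7, 9],
      ![0, 11, 4, 7, 2, 1, 10, 9, 6, 5, 8, 3],
      ![0, 9, 7, 11, 10, 5, 2, 8, 4, 3, 1, 6]])
  | 1 =>
    (![![![0, 11, 6, 3, 1, 10], ![2, 5, 9, 8, 7, 4]]],
     ![![0, 2, 7, 10, 6, 5, 8, 3, 9, 4, 11, 1],
      ![0, 3, 8, 11, 10, 1, 9, 2, 4, 5, 6, 7],
      ![0, 10, 2, 11, 3, 6, 8, 4, 1, 7, 9, 5],
      ![0, 8, 10, 5, 1, 6, 4, 7, 2, 3, 11, 9],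
      ![0, 5, 11, 2, 9, 10, 4, 3, 7, 6, 1, 8],
      ![0, 4, 6, 10, 9, 3, 5, 7, 11, 8, 1, 2],
      ![0, 9, 6, 11, 7, 5, 4, 10, 8, 2, 1, 3],
      ![0, 1, 11, 4, 9, 7, 8, 5, 10, 3, 2, 6],
      ![0, 7, 3, 10, 11, 5, 2, 8, 6, 9, 1, 4],
      ![0, 6, 2, 10, 7, 1, 5, 3, 4, 8, 9, 11]])
  | 2 =>
    (![![![0, 9, 3, 8, 2, 1], ![4, 11, 5, 10, 7, 6]],
      ![![0, 1, 7, 8, 11, 4], ![2, 3, 10, 6, 9, 5]]],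
     ![![0, 10, 4, 5, 1, 9, 7, 3, 11, 2, 6, 8],
      ![0, 7, 11, 6, 3, 5, 9, 4, 1, 8, 10, 2],
      ![0, 8, 3, 7, 9, 10, 11, 1, 2, 5, 4, 6],
      ![0, 3, 1, 4, 10, 8, 6, 5, 11, 7, 2, 9],
      ![0, 2, 4, 9, 6, 1, 11, 8, 7, 10, 5, 3],
      ![0, 11, 3, 6, 10, 9, 2, 7, 4, 8, 1, 5],
      ![0, 5, 6, 2, 8, 4, 7, 1, 10, 3, 9, 11],
      ![0, 6, 7, 5, 8, 9, 1, 3, 4, 2, 11, 10],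
      ![0, 4, 3, 2, 10, 1, 6, 11, 9, 8, 5, 7]])
  | 3 =>
    (![![![0, 4, 7, 9, 6, 8], ![1, 5, 10, 11, 3, 2]],
      ![![0, 10, 7, 2, 8, 5], ![1, 9, 4, 3, 11, 6]],
      ![![0, 7, 1, 10, 8, 3], ![2, 6, 4, 9, 11, 5]]],
     ![![0, 8, 11, 2, 4, 5, 1, 3, 7, 6, 9, 10],
      ![0, 6, 10, 4, 1, 7, 3, 5, 11, 8, 2, 9],
      ![0, 2, 5, 3, 4, 11, 9, 7, 8, 10, 1, 6],
      ![0, 5, 7, 4, 2, 10, 6, 3, 8, 9, 1, 11],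
      ![0, 1, 4, 8, 6, 11, 7, 5, 9, 3, 10, 2],
      ![0, 9, 5, 8, 4, 6, 2, 7, 11, 10, 3, 1],
      ![0, 3, 9, 8, 1, 2, 11, 4, 10, 5, 6, 7],
      ![0, 11, 1, 8, 7, 10, 9, 2, 3, 6, 5, 4]])
  | 4 =>
    (![![![0, 2, 8, 11, 1, 10], ![3, 6, 4, 9, 7, 5]],
      ![![0, 9, 8, 7, 10, 11], ![1, 2, 6, 5, 4, 3]],
      ![![0, 10, 2, 5, 9, 6], ![1, 7, 11, 3, 8, 4]],
      ![![0, 8, 9, 10, 3, 7], ![1, 4, 6, 11, 5, 2]]],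
     ![![0, 1, 5, 11, 7, 6, 10, 4, 8, 2, 9, 3],
      ![0, 7, 4, 10, 5, 6, 8, 1, 11, 2, 3, 9],
      ![0, 11, 9, 5, 1, 8, 3, 10, 6, 7, 2, 4],
      ![0, 5, 8, 10, 7, 1, 9, 11, 6, 3, 4, 2],
      ![0, 6, 1, 3, 2, 7, 9, 4, 11, 10, 8, 5],
      ![0, 4, 5, 7, 3, 11, 8, 6, 9, 2, 10, 1],
      ![0, 3, 5, 10, 9, 1, 6, 2, 11, 4, 7, 8]])
  | 5 =>
    (![![![0, 11, 7, 4, 10, 6], ![1, 5, 3, 2, 9, 8]],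
      ![![0, 9, 4, 7, 10, 2], ![1, 6, 3, 8, 5, 11]],
      ![![0, 8, 7, 9, 10, 4], ![1, 3, 11, 6, 5, 2]],
      ![![0, 5, 4, 11, 10, 1], ![2, 8, 6, 7, 3, 9]],
      ![![0, 1, 8, 4, 5, 7], ![2, 3, 6, 10, 9, 11]]],
     ![![0, 3, 7, 2, 5, 10, 11, 9, 1, 4, 6, 8],
      ![0, 10, 8, 9, 6, 11, 3, 4, 1, 2, 7, 5],
      ![0, 2, 4, 9, 7, 8, 11, 5, 6, 1, 10, 3],
      ![0, 7, 6, 2, 11, 4, 3, 1, 9, 5, 8, 10],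
      ![0, 4, 8, 2, 6, 9, 3, 10, 5, 1, 7, 11],
      ![0, 6, 4, 2, 10, 7, 1, 11, 8, 3, 5, 9]])
  | 6 =>
    (![![![0, 6, 5, 1, 9, 3], ![2, 11, 7, 10, 4, 8]],
      ![![0, 3, 2, 4, 1, 10], ![5, 7, 9, 6, 11, 8]],
      ![![0, 9, 1, 5, 3, 11], ![2, 7, 8, 6, 4, 10]],
      ![![0, 1, 3, 6, 2, 8], ![4, 5, 9, 10, 7, 11]],
      ![![0, 8, 11, 3, 10, 5], ![1, 7, 2, 9, 4, 6]],
      ![![0, 7, 4, 9, 5, 2], ![1, 11, 10, 6, 3, 8]]],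
     ![![0, 11, 1, 2, 5, 10, 3, 4, 7, 6, 8, 9],
      ![0, 10, 9, 2, 1, 8, 7, 3, 5, 4, 11, 6],
      ![0, 5, 8, 4, 2, 3, 1, 6, 10, 11, 9, 7],
      ![0, 2, 10, 8, 3, 9, 11, 5, 6, 7, 1, 4],
      ![0, 4, 3, 7, 5, 11, 2, 6, 9, 8, 10, 1]])
  | 7 =>
    (![![![0, 9, 7, 10, 6, 2], ![1, 5, 4, 8, 11, 3]],
      ![![0, 11, 5, 2, 10, 3], ![1, 4, 6, 9, 8, 7]],
      ![![0, 4, 3, 6, 1, 7], ![2, 8, 10, 9, 5, 11]],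
      ![![0, 3, 7, 9, 10, 4], ![1, 6, 5, 8, 2, 11]],
      ![![0, 10, 7, 2, 3, 5], ![1, 8, 6, 11, 9, 4]],
      ![![0, 8, 9, 3, 11, 6], ![1, 10, 2, 7, 4, 5]],
      ![![0, 1, 9, 6, 7, 8], ![2, 4, 11, 10, 5, 3]]],
     ![![0, 6, 3, 4, 7, 5, 10, 8, 1, 2, 9, 11],
      ![0, 2, 5, 6, 8, 4, 10, 11, 7, 3, 9, 1],
      ![0, 5, 7, 6, 4, 9, 2, 1, 11, 8, 3, 10],
      ![0, 7, 11, 4, 2, 6, 10, 1, 3, 8, 5, 9]])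
  | 8 =>
    (![![![0, 8, 11, 10, 4, 3], ![1, 7, 9, 2, 5, 6]],
      ![![0, 9, 11, 1, 8, 6], ![2, 3, 4, 5, 7, 10]],
      ![![0, 4, 10, 3, 5, 1], ![2, 11, 9, 6, 7, 8]],
      ![![0, 5, 8, 7, 6, 2], ![1, 4, 11, 3, 9, 10]],
      ![![0, 10, 8, 3, 6, 9], ![1, 5, 11, 7, 2, 4]],
      ![![0, 11, 2, 1, 6, 8], ![3, 10, 7, 4, 9, 5]],
      ![![0, 1, 11, 6, 3, 7], ![2, 9, 4, 8, 10, 5]],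
      ![![0, 6, 10, 9, 7, 5], ![1, 3, 11, 4, 2, 8]]],
     ![![0, 2, 6, 4, 7, 3, 8, 5, 9, 1, 10, 11],
      ![0, 7, 11, 8, 9, 3, 1, 2, 10, 6, 5, 4],
      ![0, 3, 2, 7, 1, 9, 8, 4, 6, 11, 5, 10]])
  | 9 =>
    (![![![0, 1, 5, 9, 3, 4], ![2, 10, 8, 7, 6, 11]],
      ![![0, 8, 11, 1, 4, 7], ![2, 6, 9, 10, 5, 3]],
      ![![0, 10, 1, 8, 2, 9], ![3, 7, 5, 6, 4, 11]],
      ![![0, 2, 11, 10, 9, 6], ![1, 3, 8, 4, 5, 7]],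
      ![![0, 5, 10, 2, 4, 3], ![1, 9, 11, 6, 7, 8]],
      ![![0, 11, 7, 9, 4, 10], ![1, 2, 3, 5, 8, 6]],
      ![![0, 3, 6, 8, 9, 5], ![1, 10, 7, 11, 4, 2]],
      ![![0, 7, 4, 8, 5, 2], ![1, 6, 10, 3, 11, 9]],
      ![![0, 9, 2, 5, 11, 8], ![1, 7, 10, 4, 6, 3]]],
     ![![0, 6, 2, 7, 3, 9, 8, 10, 11, 5, 4, 1],
      ![0, 4, 9, 7, 2, 8, 3, 10, 6, 5, 1, 11]])
  | 10 =>
    (![![![0, 1, 4, 2, 7, 9], ![3, 11, 6, 8, 5, 10]],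
      ![![0, 8, 1, 10, 2, 11], ![3, 4, 6, 9, 7, 5]],
      ![![0, 5, 7, 1, 9, 10], ![2, 4, 3, 6, 11, 8]],
      ![![0, 11, 3, 9, 6, 7], ![1, 5, 2, 10, 8, 4]],
      ![![0, 6, 5, 11, 1, 2], ![3, 8, 10, 7, 4, 9]],
      ![![0, 10, 6, 2, 9, 5], ![1, 11, 4, 7, 8, 3]],
      ![![0, 3, 7, 2, 6, 4], ![1, 8, 11, 10, 5, 9]],
      ![![0, 2, 1, 7, 6, 3], ![4, 10, 11, 5, 8, 9]],
      ![![0, 7, 11, 9, 2, 8], ![1, 3, 10, 4, 5, 6]],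
      ![![0, 9, 8, 6, 10, 1], ![2, 5, 4, 11, 7, 3]]],
     ![![0, 4, 8, 7, 10, 9, 11, 2, 3, 5, 1, 6]])
  | 11 =>
    (![![![0, 8, 11, 3, 4, 2], ![1, 9, 5, 7, 10, 6]],
      ![![0, 1, 4, 11, 6, 10], ![2, 9, 7, 8, 5, 3]],
      ![![0, 6, 4, 7, 2, 8], ![1, 11, 5, 10, 9, 3]],
      ![![0, 7, 9, 2, 1, 6], ![3, 10, 5, 11, 8, 4]],
      ![![0, 10, 2, 3, 11, 1], ![4, 9, 6, 5, 8, 7]],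
      ![![0, 3, 5, 1, 2, 4], ![6, 7, 11, 9, 10, 8]],
      ![![0, 5, 2, 11, 10, 3], ![1, 7, 6, 8, 9, 4]],
      ![![0, 9, 1, 8, 3, 7], ![2, 10, 4, 5, 6, 11]],
      ![![0, 11, 4, 10, 1, 5], ![2, 7, 3, 6, 9, 8]],
      ![![0, 4, 6, 2, 5, 9], ![1, 3, 8, 10, 11, 7]],
      ![![0, 2, 6, 3, 9, 11], ![1, 10, 7, 5, 4, 8]]],
     ![])

theorem decomposition_bijective (r : Fin 12) :
    (∀ i, Bijective (uncurry ((decomposition r).1 i))) ∧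
      ∀ i, Bijective ((decomposition r).2 i) := by
  revert r; decide +kernel

theorem decomposition_covers (r : Fin 12) (x y : Fin 12) (hxy : x ≠ y) :
    (∃ i c j, (decomposition r).1 i c j = x ∧ (decomposition r).1 i c (j + 1) = y) ∨
      ∃ i j, (decomposition r).2 i j = x ∧ (decomposition r).2 i (j + 1) = y := by
  revert r x y hxy; decide +kernel

/-- HWP*(12; 6^r, 12^s) has a solution if and only if r + s = 11. -/
theorem hwpStar_12_6_12 (r s : ℕ) :
    HWPStarSolution 12 6 12 r s ↔ r + s = 11 := by
  refine ⟨fun h => by have := h.card_mul_eq (by norm_num) (by norm_num); omega, fun h => ?_⟩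
  obtain rfl : s = 11 - r := by omega
  have hr : r < 12 := by omega
  obtain ⟨hshort, hlong⟩ := decomposition_bijective ⟨r, hr⟩
  refine hwpStarSolution_of_cycles (by norm_num) (by norm_num) (decomposition ⟨r, hr⟩).1
    (fun i (_ : Fin 1) => (decomposition ⟨r, hr⟩).2 i) hshort
    (fun i => (hlong i).comp (Equiv.uniqueProd _ _).bijective) (fun x y hxy => ?_) (by omega)
  exact (decomposition_covers ⟨r, hr⟩ x y hxy).imp id fun ⟨i, j, hj⟩ => ⟨i, 0, j, hj⟩
end

section
/- (Lemma 3.7, case (8,16).) For all nonnegative integers r and s, there exists a solution to HWP*(16; 8^r, 16^s) if and only if r + s = 15. -/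
/-!
Necessity is a count: every factor is fixed-point-free, so the `r + s` factors send a given vertex
to the 15 other vertices, each exactly once.

For sufficiency, read the vertex set as `ℤ/15 ∪ {∞}` with `∞ = 15`, and let `ρ : x ↦ x + 3` (of
order 5, fixing `∞`). A computer search found a 3-regular digraph `D` containing exactly one arc
from each of the 48 `⟨ρ⟩`-orbits of arcs of `K₁₆*`, so that `D, ρD, …, ρ⁴D` decompose `K₁₆*`,
together with four decompositions `baseFactor j` of `D` into three directed 2-factors, exactly `j`
of which consist of two 8-cycles while the others are Hamilton cycles. Conjugating by `ρᵏ`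
preserves cycle lengths, so using in the `k`-th copy the decomposition with `min 3 (r - 3k)`
factors of type `8²` gives a solution for every `r ≤ 15`.
-/

open Equiv Function Finset

theorem HWPStarSolution.add_eq_sub_one {v m n r s : ℕ} (h : HWPStarSolution v m n r s)
    (hm : m ≠ 1) (hn : n ≠ 1) (x : Fin v) : r + s = v - 1 := by
  obtain ⟨σ, hσm, hσn, hσ⟩ := h
  have hfree (i : Fin (r + s)) : σ i x ≠ x := fun hfix => by
    have := minimalPeriod_eq_one_iff_isFixedPt.mpr hfix
    rcases lt_or_ge (i : ℕ) r with hi | hi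
    · exact hm (hσm i hi x ▸ this)
    · exact hn (hσn i hi x ▸ this)
  have hbij : Bijective fun i => (⟨σ i x, hfree i⟩ : {y // y ≠ x}) :=
    (bijective_iff_existsUnique _).mpr fun y => by
      simpa only [Subtype.ext_iff] using hσ x y (Ne.symm y.2)
  simpa using Fintype.card_of_bijective hbij

theorem minimalPeriod_conj {α : Type*} (g f : Perm α) (x : α) :
    minimalPeriod (g * f * g⁻¹) x = minimalPeriod f (g⁻¹ x) := by
  refine minimalPeriod_eq_minimalPeriod_iff.mpr fun n => ?_
  simp only [IsPeriodicPt, IsFixedPt, Perm.iterate_eq_pow, conj_pow, Perm.mul_apply,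
    ← Perm.eq_inv_iff_eq]

section ArcCount

variable {ι κ α : Type*} [Fintype ι] [DecidableEq α]

def arcCount (σ : ι → Perm α) (x y : α) : ℕ :=
  #{i | σ i x = y}

theorem existsUnique_iff_arcCount_eq_one (σ : ι → Perm α) (x y : α) :
    (∃! i, σ i x = y) ↔ arcCount σ x y = 1 :=
  Fintype.existsUnique_iff_card_one _

theorem arcCount_prod [Fintype κ] (σ : κ × ι → Perm α) (x y : α) :
    arcCount σ x y = ∑ k, arcCount (fun i => σ (k, i)) x y := by
  simp only [arcCount, card_filter, Fintype.sum_prod_type]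

theorem arcCount_conj (g : Perm α) (τ : ι → Perm α) (x y : α) :
    arcCount (fun i => g * τ i * g⁻¹) x y = arcCount τ (g⁻¹ x) (g⁻¹ y) := by
  simp only [arcCount, Perm.mul_apply, ← Perm.eq_inv_iff_eq]

end ArcCount

theorem HWPStarSolution.of_equiv {ι : Type*} [Fintype ι] {v m n r s : ℕ}
    (e : ι ≃ Fin (r + s)) (σ : ι → Perm (Fin v))
    (hm : ∀ i, (e i : ℕ) < r → ∀ x, minimalPeriod (σ i) x = m)
    (hn : ∀ i, r ≤ (e i : ℕ) → ∀ x, minimalPeriod (σ i) x = n)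
    (hσ : ∀ x y, x ≠ y → arcCount σ x y = 1) : HWPStarSolution v m n r s :=
  ⟨σ ∘ e.symm, fun i hi => hm _ (by simpa using hi), fun i hi => hn _ (by simpa using hi),
    fun x y hxy => e.symm.existsUnique_congr_right.mpr
      ((existsUnique_iff_arcCount_eq_one σ x y).mpr (hσ x y hxy))⟩

namespace HWPStar16

def rotation : Perm (Fin 16) :=
  List.formPerm [0, 3, 6, 9, 12] * List.formPerm [1, 4, 7, 10, 13] * List.formPerm [2, 5, 8, 11, 14]

def baseFactor : Fin 4 → Fin 3 → Perm (Fin 16) :=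
  ![![List.formPerm [0, 5, 7, 9, 1, 10, 6, 14, 13, 11, 4, 12, 15, 8, 3, 2],
      List.formPerm [0, 9, 5, 6, 12, 7, 2, 14, 8, 4, 10, 11, 1, 13, 15, 3],
      List.formPerm [0, 13, 12, 1, 5, 15, 4, 9, 11, 14, 3, 6, 7, 10, 2, 8]],
    ![List.formPerm [0, 9, 5, 6, 14, 3, 2, 8] * List.formPerm [1, 13, 15, 4, 12, 7, 10, 11],
      List.formPerm [0, 5, 7, 2, 14, 13, 11, 4, 9, 1, 10, 6, 12, 15, 8, 3],
      List.formPerm [0, 13, 12, 1, 5, 15, 3, 6, 7, 9, 11, 14, 8, 4, 10, 2]],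
    ![List.formPerm [0, 9, 1, 5, 15, 3, 2, 8] * List.formPerm [4, 12, 7, 10, 6, 14, 13, 11],
      List.formPerm [0, 13, 15, 4, 9, 5, 7, 2] * List.formPerm [1, 10, 11, 14, 8, 3, 6, 12],
      List.formPerm [0, 5, 6, 7, 9, 11, 1, 13, 12, 15, 8, 4, 10, 2, 14, 3]],
    ![List.formPerm [0, 5, 7, 10, 6, 14, 3, 2] * List.formPerm [1, 13, 12, 15, 8, 4, 9, 11],
      List.formPerm [0, 9, 5, 6, 7, 2, 8, 3] * List.formPerm [1, 10, 11, 14, 13, 15, 4, 12],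
      List.formPerm [0, 13, 11, 4, 10, 2, 14, 8] * List.formPerm [1, 5, 15, 3, 6, 12, 7, 9]]]

theorem arcCount_baseFactor (j j' : Fin 4) :
    arcCount (baseFactor j) = arcCount (baseFactor j') := by
  have key : ∀ j x y, arcCount (baseFactor j) x y = arcCount (baseFactor 0) x y := by decide
  exact (funext₂ (key j)).trans (funext₂ (key j')).symm

set_option maxRecDepth 100000 in
theorem minimalPeriod_baseFactor_of_lt {j : Fin 4} {i : Fin 3} (h : (i : ℕ) < j) (x : Fin 16) :
    minimalPeriod (baseFactor j i) x = 8 := by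
  have key : ∀ (j : Fin 4) (i : Fin 3) x, (i : ℕ) < j →
      ¬IsPeriodicPt (baseFactor j i) 4 x ∧ IsPeriodicPt (baseFactor j i) 8 x := by
    decide
  exact minimalPeriod_eq_prime_pow (p := 2) (k := 2) (key j i x h).1 (key j i x h).2

set_option maxRecDepth 100000 in
theorem minimalPeriod_baseFactor_of_le {j : Fin 4} {i : Fin 3} (h : (j : ℕ) ≤ i) (x : Fin 16) :
    minimalPeriod (baseFactor j i) x = 16 := by
  have key : ∀ (j : Fin 4) (i : Fin 3) x, (j : ℕ) ≤ i →
      ¬IsPeriodicPt (baseFactor j i) 8 x ∧ IsPeriodicPt (baseFactor j i) 16 x := by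
    decide
  exact minimalPeriod_eq_prime_pow (p := 2) (k := 3) (key j i x h).1 (key j i x h).2

def factor (r : ℕ) (ki : Fin 5 × Fin 3) : Perm (Fin 16) :=
  rotation ^ (ki.1 : ℕ) * baseFactor ⟨min 3 (r - 3 * ki.1), by omega⟩ ki.2 *
    (rotation ^ (ki.1 : ℕ))⁻¹

theorem arcCount_factor (r : ℕ) : arcCount (factor r) = arcCount (factor 0) := by
  ext x y
  simp only [arcCount_prod, factor, arcCount_conj]
  exact sum_congr rfl fun k _ => congrFun₂ (arcCount_baseFactor _ _) _ _

set_option maxRecDepth 100000 in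
theorem arcCount_factor_zero : ∀ x y, x ≠ y → arcCount (factor 0) x y = 1 := by
  decide

theorem minimalPeriod_factor_of_lt {r : ℕ} {k : Fin 5} {i : Fin 3} (h : 3 * (k : ℕ) + i < r)
    (x : Fin 16) : minimalPeriod (factor r (k, i)) x = 8 := by
  rw [factor, minimalPeriod_conj]
  exact minimalPeriod_baseFactor_of_lt (by dsimp only; omega) _

theorem minimalPeriod_factor_of_le {r : ℕ} {k : Fin 5} {i : Fin 3} (h : r ≤ 3 * (k : ℕ) + i)
    (x : Fin 16) : minimalPeriod (factor r (k, i)) x = 16 := by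
  rw [factor, minimalPeriod_conj]
  exact minimalPeriod_baseFactor_of_le (by dsimp only; omega) _

end HWPStar16

open HWPStar16

/-- HWP*(16; 8^r, 16^s) has a solution if and only if r + s = 15. -/
theorem hwpStar_16_8_16 (r s : ℕ) :
    HWPStarSolution 16 8 16 r s ↔ r + s = 15 := by
  refine ⟨fun h => h.add_eq_sub_one (by decide) (by decide) 0, fun h => ?_⟩
  let e : Fin 5 × Fin 3 ≃ Fin (r + s) := finProdFinEquiv.trans (finCongr (by omega))
  have he (k : Fin 5) (i : Fin 3) : (e (k, i) : ℕ) = 3 * k + i := by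
    simp only [e, Equiv.trans_apply, finCongr_apply, Fin.val_cast, finProdFinEquiv_apply_val]
    omega
  refine .of_equiv e (factor r) (fun ⟨k, i⟩ hki => ?_) (fun ⟨k, i⟩ hki => ?_) fun x y hxy => ?_
  · exact minimalPeriod_factor_of_lt (he k i ▸ hki)
  · exact minimalPeriod_factor_of_le (he k i ▸ hki)
  · rw [arcCount_factor]
    exact arcCount_factor_zero x y hxy
end
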